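/- arXiv:2005.13533 — 11 statements merged into one kernel-verified Lean document; each statement's English description precedes it below -/
import Mathlib

section
/- Let n ≥ 1, let 𝒮 and 𝒯 be ℂ-linear maps from Matrix n n ℂ to itself such that 𝒯 is the adjoint of 𝒮 with respect to the Frobenius inner product ⟨A,B⟩ = tr(Aᴴ·B), let η > 0 and τ ≥ 0 be real, and let V₁, V₂ be positive definite matrices solving the Dyson equation (as in the context). Then tr V₁ = tr V₂. -/
open Matrix ComplexOrder

/-!
Multiply each Dyson equation by its solution and take traces. With `A = η + 𝒮[V₂]` and
`B = η + 𝒯[V₁]` this gives `n = η tr V₁ + tr (V₁ 𝒮[V₂]) + τ tr (V₁ B⁻¹)` and the same with the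
roles exchanged. The middle terms agree by adjointness, since `V₁` and `𝒯[V₁]` are Hermitian.
For the last terms, the equations say `V₁ B⁻¹ = (BA + τ)⁻¹` and `V₂ A⁻¹ = (AB + τ)⁻¹`, and
`BA + τ` is conjugate to `AB + τ` by `B`. Cancelling `η > 0` leaves `tr V₁ = tr V₂`.
-/

namespace Matrix

variable {m R : Type*} [Fintype m]

section CommRing

variable [DecidableEq m] [CommRing R]

theorem trace_inv_mul_add_smul_one_comm {A B : Matrix m m R} (hB : IsUnit B.det) (c : R) :
    trace (B * A + c • 1)⁻¹ = trace (A * B + c • 1)⁻¹ := by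
  have hconj : B * A + c • 1 = B * (A * B + c • 1) * B⁻¹ := by
    rw [Matrix.mul_add, Matrix.add_mul, Matrix.mul_assoc, Matrix.mul_assoc,
      mul_nonsing_inv _ hB, Matrix.mul_one, Matrix.mul_smul, Matrix.smul_mul, Matrix.mul_one,
      mul_nonsing_inv _ hB]
  rw [hconj, mul_inv_rev, mul_inv_rev, nonsing_inv_nonsing_inv _ hB, ← Matrix.mul_assoc,
    trace_mul_cycle, nonsing_inv_mul _ hB, Matrix.one_mul]

theorem mul_inv_eq_inv_of_inv_eq_add_smul_inv {V A B : Matrix m m R} {c : R}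
    (hV : IsUnit V.det) (hB : IsUnit B.det) (h : V⁻¹ = A + c • B⁻¹) :
    V * B⁻¹ = (B * A + c • 1)⁻¹ := by
  rw [← mul_nonsing_inv _ hB, ← Matrix.mul_smul, ← Matrix.mul_add, ← h, mul_inv_rev,
    nonsing_inv_nonsing_inv _ hV]

theorem card_eq_trace_mul_of_inv_eq {V X Y : Matrix m m R} {c d : R} (hV : IsUnit V.det)
    (h : V⁻¹ = c • 1 + X + d • Y) :
    (Fintype.card m : R) = c * trace V + trace (V * X) + d * trace (V * Y) := by
  rw [← trace_one, ← mul_nonsing_inv _ hV, h]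
  simp only [Matrix.mul_add, Matrix.mul_smul, Matrix.mul_one, trace_add, trace_smul, smul_eq_mul]

end CommRing

theorem trace_mul_apply_eq_of_trace_adjoint [CommRing R] [StarRing R]
    {S T : Matrix m m R →ₗ[R] Matrix m m R}
    (hadj : ∀ A B : Matrix m m R, trace (Aᴴ * S B) = trace ((T A)ᴴ * B))
    {V W : Matrix m m R} (hV : V.IsHermitian) (hTV : (T V).IsHermitian) :
    trace (V * S W) = trace (W * T V) := by
  rw [← hV.eq, hadj, hV.eq, hTV.eq, trace_mul_comm]

end Matrix

theorem dyson_trace_eq_general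
    (n : ℕ)
    (S T : Matrix (Fin n) (Fin n) ℂ →ₗ[ℂ] Matrix (Fin n) (Fin n) ℂ)
    (hadj : ∀ A B : Matrix (Fin n) (Fin n) ℂ,
      Matrix.trace (Aᴴ * S B) = Matrix.trace ((T A)ᴴ * B))
    (η τ : ℝ) (hη : 0 < η)
    (V₁ V₂ : Matrix (Fin n) (Fin n) ℂ)
    (hV₁ : V₁.PosDef) (hV₂ : V₂.PosDef)
    (hA : ((η : ℂ) • (1 : Matrix (Fin n) (Fin n) ℂ) + S V₂).PosDef)
    (hB : ((η : ℂ) • (1 : Matrix (Fin n) (Fin n) ℂ) + T V₁).PosDef)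
    (hD1 : V₁⁻¹ = (η : ℂ) • (1 : Matrix (Fin n) (Fin n) ℂ) + S V₂
        + (τ : ℂ) • ((η : ℂ) • (1 : Matrix (Fin n) (Fin n) ℂ) + T V₁)⁻¹)
    (hD2 : V₂⁻¹ = (η : ℂ) • (1 : Matrix (Fin n) (Fin n) ℂ) + T V₁
        + (τ : ℂ) • ((η : ℂ) • (1 : Matrix (Fin n) (Fin n) ℂ) + S V₂)⁻¹) :
    Matrix.trace V₁ = Matrix.trace V₂ := by
  have hV₁d := hV₁.isUnit.map detMonoidHom
  have hV₂d := hV₂.isUnit.map detMonoidHom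
  have hAd := hA.isUnit.map detMonoidHom
  have hBd := hB.isUnit.map detMonoidHom
  have hTV₁ : (T V₁).IsHermitian := by
    simpa using hB.isHermitian.sub (isHermitian_one.smul (Complex.conj_ofReal η))
  have hcross : trace (V₁ * S V₂) = trace (V₂ * T V₁) :=
    trace_mul_apply_eq_of_trace_adjoint hadj hV₁.isHermitian hTV₁
  have hτ : trace (V₁ * ((η : ℂ) • 1 + T V₁)⁻¹) = trace (V₂ * ((η : ℂ) • 1 + S V₂)⁻¹) := by
    rw [mul_inv_eq_inv_of_inv_eq_add_smul_inv hV₁d hBd hD1,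
      mul_inv_eq_inv_of_inv_eq_add_smul_inv hV₂d hAd hD2, trace_inv_mul_add_smul_one_comm hBd]
  have htrace := (card_eq_trace_mul_of_inv_eq hV₁d hD1).symm.trans
    (card_eq_trace_mul_of_inv_eq hV₂d hD2)
  rw [hcross, hτ] at htrace
  exact mul_left_cancel₀ (Complex.ofReal_ne_zero.2 hη.ne')
    (add_right_cancel (add_right_cancel htrace))

/-- Proposition 4.1 ("Behaviour of solution"), identity ⟨V₁⟩ = ⟨V₂⟩:
if `𝒯` is the adjoint of `𝒮` with respect to the Frobenius inner product and
`V₁, V₂` are positive definite solutions of the Dyson equation, then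
`tr V₁ = tr V₂`. -/
theorem dyson_trace_eq
    (n : ℕ) (hn : 1 ≤ n)
    (S T : Matrix (Fin n) (Fin n) ℂ →ₗ[ℂ] Matrix (Fin n) (Fin n) ℂ)
    (hadj : ∀ A B : Matrix (Fin n) (Fin n) ℂ,
      Matrix.trace (Aᴴ * S B) = Matrix.trace ((T A)ᴴ * B))
    (η τ : ℝ) (hη : 0 < η) (hτ : 0 ≤ τ)
    (V₁ V₂ : Matrix (Fin n) (Fin n) ℂ)
    (hV₁ : V₁.PosDef) (hV₂ : V₂.PosDef)
    (hA : ((η : ℂ) • (1 : Matrix (Fin n) (Fin n) ℂ) + S V₂).PosDef)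
    (hB : ((η : ℂ) • (1 : Matrix (Fin n) (Fin n) ℂ) + T V₁).PosDef)
    (hD1 : V₁⁻¹ = (η : ℂ) • (1 : Matrix (Fin n) (Fin n) ℂ) + S V₂
        + (τ : ℂ) • ((η : ℂ) • (1 : Matrix (Fin n) (Fin n) ℂ) + T V₁)⁻¹)
    (hD2 : V₂⁻¹ = (η : ℂ) • (1 : Matrix (Fin n) (Fin n) ℂ) + T V₁
        + (τ : ℂ) • ((η : ℂ) • (1 : Matrix (Fin n) (Fin n) ℂ) + S V₂)⁻¹) :
    Matrix.trace V₁ = Matrix.trace V₂ :=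
  dyson_trace_eq_general n S T hadj η τ hη V₁ V₂ hV₁ hV₂ hA hB hD1 hD2
end

section
/- Let n ≥ 1, let 𝒮 and 𝒯 be ℂ-linear maps from Matrix n n ℂ to itself, let η > 0 and τ ≥ 0 be real, and let V₁, V₂ be positive definite matrices solving the Dyson equation (as in the context). Then η·1 + 𝒮[V₂] = (η·1 + 𝒮[V₂])·V₁·(η·1 + 𝒮[V₂]) + τ·V₂, and symmetrically η·1 + 𝒯[V₁] = (η·1 + 𝒯[V₁])·V₂·(η·1 + 𝒯[V₁]) + τ·V₁. -/
/-!
The second Dyson equation gives `V₂⁻¹ (A V₁ B⁻¹) = B (A + τ B⁻¹) V₁ B⁻¹ = B V₁⁻¹ V₁ B⁻¹ = 1`, so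
`V₂ = A V₁ B⁻¹`. Expanding `A = A V₁ V₁⁻¹` with the first equation then gives
`A = A V₁ A + τ A V₁ B⁻¹ = A V₁ A + τ V₂`; the second identity is the same statement with the
roles of the two equations exchanged.
-/

open Matrix ComplexOrder Ring

section Dyson

variable {𝕜 R : Type*} [CommSemiring 𝕜] [Semiring R] [Algebra 𝕜 R]
  {A B V₁ V₂ : R} {τ : 𝕜}

theorem eq_mul_mul_inverse_of_dyson (hA : IsUnit A) (hB : IsUnit B) (hV₁ : IsUnit V₁)
    (hV₂ : IsUnit V₂) (h₁ : V₁⁻¹ʳ = A + τ • B⁻¹ʳ) (h₂ : V₂⁻¹ʳ = B + τ • A⁻¹ʳ) :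
    V₂ = A * V₁ * B⁻¹ʳ := by
  have h : V₂⁻¹ʳ * (A * V₁ * B⁻¹ʳ) = 1 :=
    calc V₂⁻¹ʳ * (A * V₁ * B⁻¹ʳ) = B * ((A + τ • B⁻¹ʳ) * V₁) * B⁻¹ʳ := by
          simp only [h₂, add_mul, mul_add, smul_mul_assoc, mul_smul_comm, ← mul_assoc,
            inverse_mul_cancel _ hA, mul_inverse_cancel _ hB, one_mul]
      _ = 1 := by
          rw [← h₁, inverse_mul_cancel _ hV₁, mul_one, mul_inverse_cancel _ hB]
  rw [inverse_mul_eq_iff_eq_mul _ _ _ hV₂, mul_one] at h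
  exact h.symm

theorem eq_mul_mul_add_smul_of_dyson (hA : IsUnit A) (hB : IsUnit B) (hV₁ : IsUnit V₁)
    (hV₂ : IsUnit V₂) (h₁ : V₁⁻¹ʳ = A + τ • B⁻¹ʳ) (h₂ : V₂⁻¹ʳ = B + τ • A⁻¹ʳ) :
    A = A * V₁ * A + τ • V₂ :=
  calc A = A * V₁ * V₁⁻¹ʳ := (mul_inverse_cancel_right _ _ hV₁).symm
    _ = A * V₁ * A + τ • (A * V₁ * B⁻¹ʳ) := by rw [h₁, mul_add, mul_smul_comm]
    _ = A * V₁ * A + τ • V₂ := by rw [← eq_mul_mul_inverse_of_dyson hA hB hV₁ hV₂ h₁ h₂]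

end Dyson

theorem dyson_quadratic_identity_general
    (n : ℕ)
    (S T : Matrix (Fin n) (Fin n) ℂ →ₗ[ℂ] Matrix (Fin n) (Fin n) ℂ)
    (η τ : ℝ)
    (V₁ V₂ : Matrix (Fin n) (Fin n) ℂ)
    (hV₁ : V₁.PosDef) (hV₂ : V₂.PosDef)
    (hA : ((η : ℂ) • (1 : Matrix (Fin n) (Fin n) ℂ) + S V₂).PosDef)
    (hB : ((η : ℂ) • (1 : Matrix (Fin n) (Fin n) ℂ) + T V₁).PosDef)
    (hD1 : V₁⁻¹ = (η : ℂ) • (1 : Matrix (Fin n) (Fin n) ℂ) + S V₂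
        + (τ : ℂ) • ((η : ℂ) • (1 : Matrix (Fin n) (Fin n) ℂ) + T V₁)⁻¹)
    (hD2 : V₂⁻¹ = (η : ℂ) • (1 : Matrix (Fin n) (Fin n) ℂ) + T V₁
        + (τ : ℂ) • ((η : ℂ) • (1 : Matrix (Fin n) (Fin n) ℂ) + S V₂)⁻¹) :
    ((η : ℂ) • (1 : Matrix (Fin n) (Fin n) ℂ) + S V₂)
        = ((η : ℂ) • (1 : Matrix (Fin n) (Fin n) ℂ) + S V₂) * V₁
            * ((η : ℂ) • (1 : Matrix (Fin n) (Fin n) ℂ) + S V₂) + (τ : ℂ) • V₂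
      ∧ ((η : ℂ) • (1 : Matrix (Fin n) (Fin n) ℂ) + T V₁)
        = ((η : ℂ) • (1 : Matrix (Fin n) (Fin n) ℂ) + T V₁) * V₂
            * ((η : ℂ) • (1 : Matrix (Fin n) (Fin n) ℂ) + T V₁) + (τ : ℂ) • V₁ := by
  simp only [nonsing_inv_eq_ringInverse] at hD1 hD2
  exact ⟨eq_mul_mul_add_smul_of_dyson hA.isUnit hB.isUnit hV₁.isUnit hV₂.isUnit hD1 hD2,
    eq_mul_mul_add_smul_of_dyson hB.isUnit hA.isUnit hV₂.isUnit hV₁.isUnit hD2 hD1⟩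

/-- The quadratic identity (3.5) derived from the Dyson equation:
`η·1 + 𝒮[V₂] = (η·1 + 𝒮[V₂])·V₁·(η·1 + 𝒮[V₂]) + τ·V₂` and symmetrically with the
roles of the two equations interchanged. -/
theorem dyson_quadratic_identity
    (n : ℕ) (hn : 1 ≤ n)
    (S T : Matrix (Fin n) (Fin n) ℂ →ₗ[ℂ] Matrix (Fin n) (Fin n) ℂ)
    (η τ : ℝ) (hη : 0 < η) (hτ : 0 ≤ τ)
    (V₁ V₂ : Matrix (Fin n) (Fin n) ℂ)
    (hV₁ : V₁.PosDef) (hV₂ : V₂.PosDef)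
    (hA : ((η : ℂ) • (1 : Matrix (Fin n) (Fin n) ℂ) + S V₂).PosDef)
    (hB : ((η : ℂ) • (1 : Matrix (Fin n) (Fin n) ℂ) + T V₁).PosDef)
    (hD1 : V₁⁻¹ = (η : ℂ) • (1 : Matrix (Fin n) (Fin n) ℂ) + S V₂
        + (τ : ℂ) • ((η : ℂ) • (1 : Matrix (Fin n) (Fin n) ℂ) + T V₁)⁻¹)
    (hD2 : V₂⁻¹ = (η : ℂ) • (1 : Matrix (Fin n) (Fin n) ℂ) + T V₁
        + (τ : ℂ) • ((η : ℂ) • (1 : Matrix (Fin n) (Fin n) ℂ) + S V₂)⁻¹) :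
    ((η : ℂ) • (1 : Matrix (Fin n) (Fin n) ℂ) + S V₂)
        = ((η : ℂ) • (1 : Matrix (Fin n) (Fin n) ℂ) + S V₂) * V₁
            * ((η : ℂ) • (1 : Matrix (Fin n) (Fin n) ℂ) + S V₂) + (τ : ℂ) • V₂
      ∧ ((η : ℂ) • (1 : Matrix (Fin n) (Fin n) ℂ) + T V₁)
        = ((η : ℂ) • (1 : Matrix (Fin n) (Fin n) ℂ) + T V₁) * V₂
            * ((η : ℂ) • (1 : Matrix (Fin n) (Fin n) ℂ) + T V₁) + (τ : ℂ) • V₁ :=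
  dyson_quadratic_identity_general n S T η τ V₁ V₂ hV₁ hV₂ hA hB hD1 hD2
end

section
/- Let n ≥ 1, let 𝒮 and 𝒯 be ℂ-linear maps from Matrix n n ℂ to itself, let η > 0 and τ ≥ 0 be real, and let V₁, V₂ be positive definite matrices solving the Dyson equation (as in the context). Write A := η·1 + 𝒮[V₂] and B := η·1 + 𝒯[V₁]. Then the matrix τ·1 + B·A is invertible, and its inverse U := (τ·1 + B·A)⁻¹ satisfies: U = V₁·B⁻¹ = A⁻¹·V₂; moreover 1 = V₁·A + τ·U = B·V₂ + τ·U; and U = V₁·V₂ + τ·U². -/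
/-!
With `A = η + 𝒮[V₂]` and `B = η + 𝒯[V₁]` the Dyson equations read `V₁⁻¹ = A + τ B⁻¹` and
`V₂⁻¹ = B + τ A⁻¹`. Multiplying the first by `B` on the left and the second by `A` on the right
factors `τ + B A` as `B V₁⁻¹ = V₂⁻¹ A`, so its inverse is `V₁ B⁻¹ = A⁻¹ V₂`. The identities
for `1` are `V₁ V₁⁻¹ = 1 = V₂⁻¹ V₂` expanded, and `U = (V₁ A + τ U) A⁻¹ V₂` gives the last one.
-/

open Matrix ComplexOrder

namespace Matrix

variable {m R : Type*} [Fintype m] [DecidableEq m] [CommRing R]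
  {A B V₁ V₂ : Matrix m m R} {c : R}

theorem smul_one_add_mul_eq_mul_inv (hB : IsUnit B.det) (h : V₁⁻¹ = A + c • B⁻¹) :
    c • 1 + B * A = B * V₁⁻¹ := by
  rw [h, Matrix.mul_add, Matrix.mul_smul, mul_nonsing_inv B hB, add_comm]

theorem smul_one_add_mul_eq_inv_mul (hA : IsUnit A.det) (h : V₂⁻¹ = B + c • A⁻¹) :
    c • 1 + B * A = V₂⁻¹ * A := by
  rw [h, Matrix.add_mul, Matrix.smul_mul, nonsing_inv_mul A hA, add_comm]

theorem isUnit_smul_one_add_mul (hB : IsUnit B.det) (hV₁ : IsUnit V₁.det)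
    (h : V₁⁻¹ = A + c • B⁻¹) : IsUnit (c • 1 + B * A) := by
  rw [smul_one_add_mul_eq_mul_inv hB h, isUnit_iff_isUnit_det, det_mul]
  exact hB.mul (isUnit_nonsing_inv_det V₁ hV₁)

theorem inv_smul_one_add_mul_eq_mul_inv (hB : IsUnit B.det) (hV₁ : IsUnit V₁.det)
    (h : V₁⁻¹ = A + c • B⁻¹) : (c • 1 + B * A)⁻¹ = V₁ * B⁻¹ := by
  rw [smul_one_add_mul_eq_mul_inv hB h, mul_inv_rev, nonsing_inv_nonsing_inv V₁ hV₁]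

theorem inv_smul_one_add_mul_eq_inv_mul (hA : IsUnit A.det) (hV₂ : IsUnit V₂.det)
    (h : V₂⁻¹ = B + c • A⁻¹) : (c • 1 + B * A)⁻¹ = A⁻¹ * V₂ := by
  rw [smul_one_add_mul_eq_inv_mul hA h, mul_inv_rev, nonsing_inv_nonsing_inv V₂ hV₂]

theorem one_eq_mul_add_smul_mul_inv (hV₁ : IsUnit V₁.det) (h : V₁⁻¹ = A + c • B⁻¹) :
    1 = V₁ * A + c • (V₁ * B⁻¹) := by
  rw [← Matrix.mul_smul, ← Matrix.mul_add, ← h, mul_nonsing_inv V₁ hV₁]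

theorem one_eq_mul_add_smul_inv_mul (hV₂ : IsUnit V₂.det) (h : V₂⁻¹ = B + c • A⁻¹) :
    1 = B * V₂ + c • (A⁻¹ * V₂) := by
  rw [← Matrix.smul_mul, ← Matrix.add_mul, ← h, nonsing_inv_mul V₂ hV₂]

theorem eq_mul_add_smul_sq {U : Matrix m m R} (hA : IsUnit A.det) (hU : U = A⁻¹ * V₂)
    (h : 1 = V₁ * A + c • U) : U = V₁ * V₂ + c • U ^ 2 := calc
  U = (V₁ * A + c • U) * (A⁻¹ * V₂) := by rw [← h, one_mul, hU]
  _ = V₁ * V₂ + c • U ^ 2 := by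
    rw [Matrix.add_mul, Matrix.smul_mul, mul_assoc V₁ A, mul_nonsing_inv_cancel_left A V₂ hA,
      ← hU, sq]

end Matrix

theorem dyson_U_identities_general
    (n : ℕ)
    (S T : Matrix (Fin n) (Fin n) ℂ →ₗ[ℂ] Matrix (Fin n) (Fin n) ℂ)
    (η τ : ℝ)
    (V₁ V₂ : Matrix (Fin n) (Fin n) ℂ)
    (hV₁ : V₁.PosDef) (hV₂ : V₂.PosDef)
    (hApos : ((η : ℂ) • (1 : Matrix (Fin n) (Fin n) ℂ) + S V₂).PosDef)
    (hBpos : ((η : ℂ) • (1 : Matrix (Fin n) (Fin n) ℂ) + T V₁).PosDef)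
    (hD1 : V₁⁻¹ = (η : ℂ) • (1 : Matrix (Fin n) (Fin n) ℂ) + S V₂
        + (τ : ℂ) • ((η : ℂ) • (1 : Matrix (Fin n) (Fin n) ℂ) + T V₁)⁻¹)
    (hD2 : V₂⁻¹ = (η : ℂ) • (1 : Matrix (Fin n) (Fin n) ℂ) + T V₁
        + (τ : ℂ) • ((η : ℂ) • (1 : Matrix (Fin n) (Fin n) ℂ) + S V₂)⁻¹) :
    ∀ A B U : Matrix (Fin n) (Fin n) ℂ,
      A = (η : ℂ) • (1 : Matrix (Fin n) (Fin n) ℂ) + S V₂ →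
      B = (η : ℂ) • (1 : Matrix (Fin n) (Fin n) ℂ) + T V₁ →
      U = ((τ : ℂ) • (1 : Matrix (Fin n) (Fin n) ℂ) + B * A)⁻¹ →
      IsUnit ((τ : ℂ) • (1 : Matrix (Fin n) (Fin n) ℂ) + B * A)
        ∧ U = V₁ * B⁻¹
        ∧ U = A⁻¹ * V₂
        ∧ (1 : Matrix (Fin n) (Fin n) ℂ) = V₁ * A + (τ : ℂ) • U
        ∧ (1 : Matrix (Fin n) (Fin n) ℂ) = B * V₂ + (τ : ℂ) • U
        ∧ U = V₁ * V₂ + (τ : ℂ) • U ^ 2 := by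
  rintro A B U rfl rfl rfl
  have hA := (isUnit_iff_isUnit_det _).mp hApos.isUnit
  have hB := (isUnit_iff_isUnit_det _).mp hBpos.isUnit
  have hV₁' := (isUnit_iff_isUnit_det _).mp hV₁.isUnit
  have hV₂' := (isUnit_iff_isUnit_det _).mp hV₂.isUnit
  have hU₁ := inv_smul_one_add_mul_eq_mul_inv hB hV₁' hD1
  have hU₂ := inv_smul_one_add_mul_eq_inv_mul hA hV₂' hD2
  have h₁ : 1 = V₁ * _ + (τ : ℂ) • _ := hU₁ ▸ one_eq_mul_add_smul_mul_inv hV₁' hD1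
  exact ⟨isUnit_smul_one_add_mul hB hV₁' hD1, hU₁, hU₂, h₁,
    hU₂ ▸ one_eq_mul_add_smul_inv_mul hV₂' hD2, eq_mul_add_smul_sq hA hU₂ h₁⟩

/-- Identities (4.7), (4.8), (4.9) of the paper for
`U = (τ·1 + (η·1+𝒯V₁)(η·1+𝒮V₂))⁻¹`, the off-diagonal block of the solution of the
matrix Dyson equation. -/
theorem dyson_U_identities
    (n : ℕ) (hn : 1 ≤ n)
    (S T : Matrix (Fin n) (Fin n) ℂ →ₗ[ℂ] Matrix (Fin n) (Fin n) ℂ)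
    (η τ : ℝ) (hη : 0 < η) (hτ : 0 ≤ τ)
    (V₁ V₂ : Matrix (Fin n) (Fin n) ℂ)
    (hV₁ : V₁.PosDef) (hV₂ : V₂.PosDef)
    (hApos : ((η : ℂ) • (1 : Matrix (Fin n) (Fin n) ℂ) + S V₂).PosDef)
    (hBpos : ((η : ℂ) • (1 : Matrix (Fin n) (Fin n) ℂ) + T V₁).PosDef)
    (hD1 : V₁⁻¹ = (η : ℂ) • (1 : Matrix (Fin n) (Fin n) ℂ) + S V₂
        + (τ : ℂ) • ((η : ℂ) • (1 : Matrix (Fin n) (Fin n) ℂ) + T V₁)⁻¹)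
    (hD2 : V₂⁻¹ = (η : ℂ) • (1 : Matrix (Fin n) (Fin n) ℂ) + T V₁
        + (τ : ℂ) • ((η : ℂ) • (1 : Matrix (Fin n) (Fin n) ℂ) + S V₂)⁻¹) :
    ∀ A B U : Matrix (Fin n) (Fin n) ℂ,
      A = (η : ℂ) • (1 : Matrix (Fin n) (Fin n) ℂ) + S V₂ →
      B = (η : ℂ) • (1 : Matrix (Fin n) (Fin n) ℂ) + T V₁ →
      U = ((τ : ℂ) • (1 : Matrix (Fin n) (Fin n) ℂ) + B * A)⁻¹ →
      IsUnit ((τ : ℂ) • (1 : Matrix (Fin n) (Fin n) ℂ) + B * A)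
        ∧ U = V₁ * B⁻¹
        ∧ U = A⁻¹ * V₂
        ∧ (1 : Matrix (Fin n) (Fin n) ℂ) = V₁ * A + (τ : ℂ) • U
        ∧ (1 : Matrix (Fin n) (Fin n) ℂ) = B * V₂ + (τ : ℂ) • U
        ∧ U = V₁ * V₂ + (τ : ℂ) • U ^ 2 :=
  dyson_U_identities_general n S T η τ V₁ V₂ hV₁ hV₂ hApos hBpos hD1 hD2
end

section
/- Let n ≥ 1, let 𝒮 and 𝒯 be ℂ-linear maps from Matrix n n ℂ to itself, let η > 0 and τ ≥ 0 be real, and let V₁, V₂ be positive definite matrices solving the Dyson equation (as in the context). Assume in addition that the linear map τ·id − 𝒮 on Matrix n n ℂ is bijective and that its inverse (τ·id − 𝒮)⁻¹ maps positive semidefinite matrices to positive semidefinite matrices. Then η·(τ·id − 𝒮)⁻¹[1] − V₂ is positive semidefinite, i.e. V₂ ≤ η·(τ·id − 𝒮)⁻¹[1] in the Loewner order. -/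
/-!
The second Dyson equation reads `V₂⁻¹ = (η + 𝒯[V₁]) + τ A⁻¹` with `A = η + 𝒮[V₂] > 0`, so
`τ A⁻¹ ≤ V₂⁻¹`, and antitonicity of the matrix inverse in the Loewner order gives `τ V₂ ≤ A`.
If `(τ·id − 𝒮)[W] = 1`, then `(τ·id − 𝒮)[ηW − V₂] = A − τ V₂ ≥ 0`, and the positivity of
`(τ·id − 𝒮)⁻¹` yields `ηW − V₂ ≥ 0`.
-/

open Matrix ComplexOrder
open scoped MatrixOrder

namespace Matrix

variable {m : Type*} [Fintype m] [DecidableEq m]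

open scoped Norms.L2Operator in
theorem PosDef.inv_le_inv {A B : Matrix m m ℂ} (hA : A.PosDef) (hAB : A ≤ B) : B⁻¹ ≤ A⁻¹ := by
  simpa only [nonsing_inv_eq_ringInverse] using
    CStarAlgebra.ringInverse_le_ringInverse hAB hA.isStrictlyPositive

theorem PosDef.smul_le_of_smul_inv_le {A X : Matrix m m ℂ} (hA : A.PosDef) (hX : X.PosDef)
    {c : ℝ} (hc : 0 ≤ c) (h : (c : ℂ) • A⁻¹ ≤ X⁻¹) : (c : ℂ) • X ≤ A := by
  rcases hc.eq_or_lt with rfl | hc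
  · simpa using hA.posSemidef.nonneg
  have hc' : (0 : ℂ) < c := by exact_mod_cast hc
  have hinv : X⁻¹⁻¹ ≤ ((c : ℂ) • A⁻¹)⁻¹ := (hA.inv.smul hc').inv_le_inv h
  have hcA : ((c : ℂ) • A⁻¹)⁻¹ = (c : ℂ)⁻¹ • A := by
    refine inv_eq_left_inv ?_
    rw [smul_mul_smul_comm, inv_mul_cancel₀ hc'.ne', one_smul,
      mul_nonsing_inv _ ((isUnit_iff_isUnit_det _).mp hA.isUnit)]
  rw [hcA, nonsing_inv_nonsing_inv _ ((isUnit_iff_isUnit_det _).mp hX.isUnit)] at hinv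
  simpa [smul_smul, hc'.ne'] using smul_le_smul_of_nonneg_left hinv hc'.le

end Matrix

theorem dyson_V_small_outside_general
    (n : ℕ)
    (S T : Matrix (Fin n) (Fin n) ℂ →ₗ[ℂ] Matrix (Fin n) (Fin n) ℂ)
    (η τ : ℝ) (hτ : 0 ≤ τ)
    (V₁ V₂ : Matrix (Fin n) (Fin n) ℂ)
    (hV₂ : V₂.PosDef)
    (hApos : ((η : ℂ) • (1 : Matrix (Fin n) (Fin n) ℂ) + S V₂).PosDef)
    (hBpos : ((η : ℂ) • (1 : Matrix (Fin n) (Fin n) ℂ) + T V₁).PosDef)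
    (hD2 : V₂⁻¹ = (η : ℂ) • (1 : Matrix (Fin n) (Fin n) ℂ) + T V₁
        + (τ : ℂ) • ((η : ℂ) • (1 : Matrix (Fin n) (Fin n) ℂ) + S V₂)⁻¹)
    (hposinv : ∀ B : Matrix (Fin n) (Fin n) ℂ,
      ((τ : ℂ) • B - S B).PosSemidef → B.PosSemidef) :
    ∀ W : Matrix (Fin n) (Fin n) ℂ,
      (τ : ℂ) • W - S W = (1 : Matrix (Fin n) (Fin n) ℂ) →
      ((η : ℂ) • W - V₂).PosSemidef := by
  intro W hW
  set A := (η : ℂ) • (1 : Matrix (Fin n) (Fin n) ℂ) + S V₂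
  have hV₂_inv : (τ : ℂ) • A⁻¹ ≤ V₂⁻¹ := by
    rw [Matrix.le_iff, hD2, add_sub_cancel_right]
    exact hBpos.posSemidef
  have hV₂_le : (τ : ℂ) • V₂ ≤ A := hApos.smul_le_of_smul_inv_le hV₂ hτ hV₂_inv
  have hmap : (τ : ℂ) • ((η : ℂ) • W - V₂) - S ((η : ℂ) • W - V₂) = A - (τ : ℂ) • V₂ := by
    rw [map_sub, map_smul]
    linear_combination (norm := module) (η : ℂ) • hW
  exact hposinv _ (hmap ▸ Matrix.le_iff.mp hV₂_le)

/-- Key step in the proof of Lemma 3.1: if `τ·id − 𝒮` is bijective with a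
positivity-preserving inverse, then the solution `V₂` of the Dyson equation satisfies
`V₂ ≤ η·(τ·id − 𝒮)⁻¹[1]` in the Loewner order. -/
theorem dyson_V_small_outside
    (n : ℕ) (hn : 1 ≤ n)
    (S T : Matrix (Fin n) (Fin n) ℂ →ₗ[ℂ] Matrix (Fin n) (Fin n) ℂ)
    (η τ : ℝ) (hη : 0 < η) (hτ : 0 ≤ τ)
    (V₁ V₂ : Matrix (Fin n) (Fin n) ℂ)
    (hV₁ : V₁.PosDef) (hV₂ : V₂.PosDef)
    (hApos : ((η : ℂ) • (1 : Matrix (Fin n) (Fin n) ℂ) + S V₂).PosDef)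
    (hBpos : ((η : ℂ) • (1 : Matrix (Fin n) (Fin n) ℂ) + T V₁).PosDef)
    (hD1 : V₁⁻¹ = (η : ℂ) • (1 : Matrix (Fin n) (Fin n) ℂ) + S V₂
        + (τ : ℂ) • ((η : ℂ) • (1 : Matrix (Fin n) (Fin n) ℂ) + T V₁)⁻¹)
    (hD2 : V₂⁻¹ = (η : ℂ) • (1 : Matrix (Fin n) (Fin n) ℂ) + T V₁
        + (τ : ℂ) • ((η : ℂ) • (1 : Matrix (Fin n) (Fin n) ℂ) + S V₂)⁻¹)
    (hbij : Function.Bijective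
      (fun B : Matrix (Fin n) (Fin n) ℂ => (τ : ℂ) • B - S B))
    (hposinv : ∀ B : Matrix (Fin n) (Fin n) ℂ,
      ((τ : ℂ) • B - S B).PosSemidef → B.PosSemidef) :
    ∀ W : Matrix (Fin n) (Fin n) ℂ,
      (τ : ℂ) • W - S W = (1 : Matrix (Fin n) (Fin n) ℂ) →
      ((η : ℂ) • W - V₂).PosSemidef :=
  dyson_V_small_outside_general n S T η τ hτ V₁ V₂ hV₂ hApos hBpos hD2 hposinv
end

section
/- Let d ≥ 1, equip ℂ^d with its standard inner product ⟪·,·⟫ (conjugate-linear in the first argument), and let ‖·‖_# be an arbitrary norm on ℂ^d. Let ε ∈ (0,1), A ∈ Matrix d d ℂ, α ∈ ℂ with |α| ≤ ε, and a, p, b ∈ ℂ^d satisfy: A·a = α·a, ‖a‖_# = 1, ⟪p, a⟫ = 1, |⟪a, b⟫| ≥ 2ε, |⟪b, w⟫| ≤ ‖w‖_# for all w ∈ ℂ^d, and ‖A·w‖_# ≥ ‖w‖_# for all w ∈ ℂ^d with ⟪p, w⟫ = 0. Then for every w ∈ ℂ^d with ⟪b, w⟫ = 0 one has ‖A·w‖_#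 ≥ (ε/3)·‖w‖_#. -/
open Matrix

/-!
With `π = ⟪p, ·⟫`, `β = ⟪b, ·⟫` and `T = A.mulVec`, split `w = u + c • a` with `c = π w`, so
that `π u = 0`. On `ker β` the twist condition `2ε ≤ ‖β a‖` forces `2ε‖c‖ ≤ N u`, so the
eigen-component costs at most `ε‖c‖ ≤ N u / 2` in `N (T w)`, while `T` is bounded below on `u`.
Hence `N u ≤ 2 N (T w)`, and `ε N w ≤ ε N u + ε‖c‖ ≤ 3/2 N u`.
-/

namespace Seminorm

variable {𝕜 E : Type*} [NormedField 𝕜] [AddCommGroup E] [Module 𝕜 E]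
  (N : Seminorm 𝕜 E) (π β : E →ₗ[𝕜] 𝕜) (a : E)

lemma le_sub_smul_add_norm (hNa : N a = 1) (w : E) : N w ≤ N (w - π w • a) + ‖π w‖ := by
  simpa [map_smul_eq_mul, hNa] using map_add_le_add N (w - π w • a) (π w • a)

lemma norm_mul_le_sub_smul_of_ker (hβ : ∀ w, ‖β w‖ ≤ N w) {w : E} (hw : β w = 0) :
    ‖π w‖ * ‖β a‖ ≤ N (w - π w • a) := by
  have hβu : β (w - π w • a) = -(π w * β a) := by simp [hw]
  simpa [hβu] using hβ (w - π w • a)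

lemma sub_smul_le_of_eigenvector (T : E →ₗ[𝕜] E) {α : 𝕜} (hTa : T a = α • a) (hNa : N a = 1)
    (hπa : π a = 1) (hlow : ∀ u, π u = 0 → N u ≤ N (T u)) (w : E) :
    N (w - π w • a) ≤ N (T w) + ‖π w‖ * ‖α‖ := by
  have hπu : π (w - π w • a) = 0 := by simp [hπa]
  have hTu : T (w - π w • a) = T w - (π w * α) • a := by simp [hTa, smul_smul]
  calc N (w - π w • a) ≤ N (T (w - π w • a)) := hlow _ hπu
    _ ≤ N (T w) + N ((π w * α) • a) := hTu ▸ map_sub_le_add N _ _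
    _ = N (T w) + ‖π w‖ * ‖α‖ := by rw [map_smul_eq_mul, hNa, norm_mul, mul_one]

theorem twist_lowerBound (T : E →ₗ[𝕜] E) {α : 𝕜} {ε : ℝ} (hα : ‖α‖ ≤ ε) (hε : ε ≤ 1)
    (hTa : T a = α • a) (hNa : N a = 1) (hπa : π a = 1) (hβa : 2 * ε ≤ ‖β a‖)
    (hβ : ∀ w, ‖β w‖ ≤ N w) (hlow : ∀ u, π u = 0 → N u ≤ N (T u)) {w : E} (hw : β w = 0) :
    ε / 3 * N w ≤ N (T w) := by
  set c := ‖π w‖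
  set u := N (w - π w • a)
  have hε0 : 0 ≤ ε := (norm_nonneg α).trans hα
  have hcu : c * (2 * ε) ≤ u :=
    (mul_le_mul_of_nonneg_left hβa (norm_nonneg _)).trans
      (N.norm_mul_le_sub_smul_of_ker π β a hβ hw)
  have hTw : u ≤ N (T w) + c * ε :=
    (N.sub_smul_le_of_eigenvector π a T hTa hNa hπa hlow w).trans
      (by gcongr)
  have hu0 : 0 ≤ u := (by positivity : 0 ≤ c * (2 * ε)).trans hcu
  calc ε / 3 * N w ≤ ε / 3 * (u + c) :=
        mul_le_mul_of_nonneg_left (N.le_sub_smul_add_norm π a hNa w) (by positivity)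
    _ ≤ u / 2 := by nlinarith
    _ ≤ N (T w) := by linarith

end Seminorm

theorem twist_lemma_general
    (d : ℕ)
    (N : (Fin d → ℂ) → ℝ)
    (hNadd : ∀ x y : Fin d → ℂ, N (x + y) ≤ N x + N y)
    (hNsmul : ∀ (c : ℂ) (x : Fin d → ℂ), N (c • x) = ‖c‖ * N x)
    (ε : ℝ) (hε : ε ∈ Set.Ioo (0 : ℝ) 1)
    (A : Matrix (Fin d) (Fin d) ℂ) (α : ℂ) (hα : ‖α‖ ≤ ε)
    (a p b : Fin d → ℂ)
    (ha : A.mulVec a = α • a)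
    (hNa : N a = 1)
    (hpa : star p ⬝ᵥ a = 1)
    (hab : 2 * ε ≤ ‖star a ⬝ᵥ b‖)
    (hb : ∀ w : Fin d → ℂ, ‖star b ⬝ᵥ w‖ ≤ N w)
    (hlow : ∀ w : Fin d → ℂ, star p ⬝ᵥ w = 0 → N w ≤ N (A.mulVec w)) :
    ∀ w : Fin d → ℂ, star b ⬝ᵥ w = 0 → (ε / 3) * N w ≤ N (A.mulVec w) := by
  intro w hw
  have hba : 2 * ε ≤ ‖star b ⬝ᵥ a‖ := by rwa [star_dotProduct, norm_star] at hab
  exact (Seminorm.of N hNadd hNsmul).twist_lowerBound (dotProductBilin ℂ ℂ (star p))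
    (dotProductBilin ℂ ℂ (star b)) a A.mulVecLin hα hε.2.le ha hNa hpa hba hb hlow hw

/-- The Twist Lemma (Lemma C.1 of the paper): if `A` has an isolated small
eigenvalue `α` with eigenvector `a`, spectral projection `w ↦ ⟪p,w⟫·a`, and `A` is
bounded below on `p^⊥`, then `A` is bounded below (with constant `ε/3`) on the
twisted hyperplane `b^⊥`. Here `⟪x,y⟫ = Σᵢ conj(xᵢ)·yᵢ` is the standard inner
product and `N` is an arbitrary norm on `ℂ^d`. -/
theorem twist_lemma
    (d : ℕ) (hd : 1 ≤ d)
    (N : (Fin d → ℂ) → ℝ)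
    (hNadd : ∀ x y : Fin d → ℂ, N (x + y) ≤ N x + N y)
    (hNsmul : ∀ (c : ℂ) (x : Fin d → ℂ), N (c • x) = ‖c‖ * N x)
    (hNdef : ∀ x : Fin d → ℂ, N x = 0 → x = 0)
    (ε : ℝ) (hε : ε ∈ Set.Ioo (0 : ℝ) 1)
    (A : Matrix (Fin d) (Fin d) ℂ) (α : ℂ) (hα : ‖α‖ ≤ ε)
    (a p b : Fin d → ℂ)
    (ha : A.mulVec a = α • a)
    (hNa : N a = 1)
    (hpa : star p ⬝ᵥ a = 1)
    (hab : 2 * ε ≤ ‖star a ⬝ᵥ b‖)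
    (hb : ∀ w : Fin d → ℂ, ‖star b ⬝ᵥ w‖ ≤ N w)
    (hlow : ∀ w : Fin d → ℂ, star p ⬝ᵥ w = 0 → N w ≤ N (A.mulVec w)) :
    ∀ w : Fin d → ℂ, star b ⬝ᵥ w = 0 → (ε / 3) * N w ≤ N (A.mulVec w) :=
  twist_lemma_general d N hNadd hNsmul ε hε A α hα a p b ha hNa hpa hab hb hlow
end

section
/- Let d ≥ 1 and let N_# and N_+ be two norms on ℂ^d; for a matrix A ∈ Matrix d d ℂ let ‖A‖_{α→β} := sup { N_β(A·v) : N_α(v) ≤ 1 } denote the induced operator norms. Let B ∈ Matrix d d ℂ and C > 0 satisfy ‖B‖_{#→#} + ‖B‖_{#→+}·‖B‖_{+→#} ≤ C. Then for every ξ ∈ ℂ with ξ ≠ 0 such that B − ξ·1 is invertible, one has ‖(B − ξ·1)⁻¹‖_{#→#} ≤ 1/|ξ| + (C/|ξ|²)·(1 + ‖(B − ξ·1)⁻¹‖_{+→+}). -/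
open Matrix

/-- The operator norm of a matrix `A : ℂ^d → ℂ^d`, where the domain is equipped with
the norm `N1` and the codomain with the norm `N2`. -/
noncomputable def inducedOpNorm (d : ℕ) (N1 N2 : (Fin d → ℂ) → ℝ)
    (A : Matrix (Fin d) (Fin d) ℂ) : ℝ :=
  sSup {r : ℝ | ∃ v : Fin d → ℂ, N1 v ≤ 1 ∧ r = N2 (A.mulVec v)}

/-!
Writing `R = (B - ξ)⁻¹`, the identity `ξ² R = B R B - B - ξ` (which follows from `B = (B - ξ) + ξ`)
gives `|ξ|² ‖R v‖_# ≤ ‖B R B v‖_# + ‖B v‖_# + |ξ| ‖v‖_#`, and the middle factor of `B R B` is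
estimated by passing through the `+`-norm: `B : # → +`, then `R : + → +`, then `B : + → #`.

The operator-norm bound `N₂ (A v) ≤ ‖A‖ N₁ v` needs the supremum defining `inducedOpNorm` to be
finite (otherwise `sSup` is junk); this holds because on a finite-dimensional space a norm is
continuous and bounded below by a multiple of the standard norm, so its unit ball is compact.
-/

namespace Seminorm

variable {E : Type*} [NormedAddCommGroup E] [NormedSpace ℂ E] [FiniteDimensional ℂ E]

protected theorem continuous_of_finiteDimensional (p : Seminorm ℂ E) : Continuous p :=
  p.convexOn.locallyLipschitz.continuous

theorem exists_pos_mul_norm_le (p : Seminorm ℂ E) (hp : ∀ x, p x = 0 → x = 0) :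
    ∃ m > 0, ∀ x, m * ‖x‖ ≤ p x := by
  rcases subsingleton_or_nontrivial E with hE | hE
  · exact ⟨1, one_pos, fun x => by simp [Subsingleton.elim x 0]⟩
  obtain ⟨x₀, hx₀, hmin⟩ := (isCompact_sphere (0 : E) 1).exists_isMinOn
    (NormedSpace.sphere_nonempty.mpr zero_le_one) p.continuous_of_finiteDimensional.continuousOn
  have hx₀ : ‖x₀‖ = 1 := by simpa using hx₀
  refine ⟨p x₀, (apply_nonneg p x₀).lt_of_ne' fun h => by simp [hp x₀ h] at hx₀, fun x => ?_⟩
  rcases eq_or_ne x 0 with rfl | hx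
  · simp
  have hu : ((‖x‖⁻¹ : ℝ) : ℂ) • x ∈ Metric.sphere (0 : E) 1 := by
    simp [norm_smul, hx]
  have h : p x₀ ≤ p _ := hmin hu
  rw [map_smul_eq_mul, Complex.norm_real, norm_inv, norm_norm, ← div_eq_inv_mul] at h
  rwa [← le_div_iff₀ (norm_pos_iff.mpr hx)]

theorem isCompact_closedBall_zero (p : Seminorm ℂ E) (hp : ∀ x, p x = 0 → x = 0) (r : ℝ) :
    IsCompact (p.closedBall 0 r) := by
  obtain ⟨m, hm, hmp⟩ := p.exists_pos_mul_norm_le hp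
  refine Metric.isCompact_of_isClosed_isBounded ?_ ?_
  · rw [p.closedBall_zero_eq]
    exact isClosed_le p.continuous_of_finiteDimensional continuous_const
  · refine (Metric.isBounded_closedBall (x := 0) (r := r / m)).subset fun x hx => ?_
    rw [mem_closedBall_zero_iff, le_div_iff₀' hm]
    exact (hmp x).trans (p.mem_closedBall_zero.mp hx)

theorem le_sSup_image_closedBall_mul (p q : Seminorm ℂ E) (hp : ∀ x, p x = 0 → x = 0) (x : E) :
    q x ≤ sSup (q '' p.closedBall 0 1) * p x := by
  rcases eq_or_ne (p x) 0 with h | h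
  · simp [hp x h]
  have hbdd := ((p.isCompact_closedBall_zero hp 1).image q.continuous_of_finiteDimensional).bddAbove
  have hnorm : ‖(p x : ℂ)⁻¹‖ = (p x)⁻¹ := by
    rw [norm_inv, Complex.norm_real, Real.norm_of_nonneg (apply_nonneg p x)]
  have hu : (p x : ℂ)⁻¹ • x ∈ p.closedBall 0 1 := by
    rw [p.mem_closedBall_zero, map_smul_eq_mul, hnorm, inv_mul_cancel₀ h]
  have hle := le_csSup hbdd (Set.mem_image_of_mem q hu)
  rwa [map_smul_eq_mul, hnorm, ← div_eq_inv_mul,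
    div_le_iff₀ ((apply_nonneg p x).lt_of_ne' h)] at hle

end Seminorm

section inducedOpNorm

variable {d : ℕ} (p₁ p₂ : Seminorm ℂ (Fin d → ℂ)) (A : Matrix (Fin d) (Fin d) ℂ)

theorem inducedOpNorm_eq_sSup_image :
    inducedOpNorm d p₁ p₂ A = sSup ((p₂.comp A.mulVecLin) '' p₁.closedBall 0 1) := by
  unfold inducedOpNorm
  congr 1
  ext r
  simp [eq_comm]

theorem le_inducedOpNorm_mul (hp₁ : ∀ x, p₁ x = 0 → x = 0) (v : Fin d → ℂ) :
    p₂ (A *ᵥ v) ≤ inducedOpNorm d p₁ p₂ A * p₁ v := by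
  rw [inducedOpNorm_eq_sSup_image]
  exact p₁.le_sSup_image_closedBall_mul (p₂.comp A.mulVecLin) hp₁ v

theorem inducedOpNorm_nonneg (N₁ : (Fin d → ℂ) → ℝ) : 0 ≤ inducedOpNorm d N₁ p₂ A :=
  Real.sSup_nonneg (by rintro _ ⟨v, -, rfl⟩; exact apply_nonneg p₂ _)

theorem inducedOpNorm_le {N₂ : (Fin d → ℂ) → ℝ} {M : ℝ}
    (h : ∀ v, p₁ v ≤ 1 → N₂ (A *ᵥ v) ≤ M) : inducedOpNorm d p₁ N₂ A ≤ M :=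
  csSup_le ⟨_, 0, by simp, rfl⟩ (by rintro _ ⟨v, hv, rfl⟩; exact h v hv)

end inducedOpNorm

theorem sq_smul_resolvent_eq {R A : Type*} [CommRing R] [Ring A] [Algebra R A] {b r : A} {ξ : R}
    (h₁ : r * (b - ξ • 1) = 1) (h₂ : (b - ξ • 1) * r = 1) :
    ξ ^ 2 • r = b * r * b - b - ξ • 1 := by
  have hb : b = (b - ξ • 1) + ξ • 1 := by abel
  set m := b - ξ • 1
  rw [hb]
  simp only [mul_add, add_mul, h₁, h₂, smul_mul_assoc, mul_smul_comm, one_mul, mul_one, smul_add,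
    smul_smul]
  module

theorem Matrix.sq_norm_mul_resolvent_mulVec_le {ι : Type*} [Fintype ι] [DecidableEq ι]
    (p : Seminorm ℂ (ι → ℂ)) (B : Matrix ι ι ℂ) (ξ : ℂ) (hB : IsUnit (B - ξ • 1)) (v : ι → ℂ) :
    ‖ξ‖ ^ 2 * p ((B - ξ • 1)⁻¹ *ᵥ v)
      ≤ p (B *ᵥ (B - ξ • 1)⁻¹ *ᵥ B *ᵥ v) + p (B *ᵥ v) + ‖ξ‖ * p v := by
  have hdet := (isUnit_iff_isUnit_det _).mp hB
  have hR := congrArg (· *ᵥ v) (sq_smul_resolvent_eq (nonsing_inv_mul _ hdet)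
    (mul_nonsing_inv _ hdet))
  simp only [smul_mulVec, sub_mulVec, one_mulVec, ← mulVec_mulVec] at hR
  calc ‖ξ‖ ^ 2 * p ((B - ξ • 1)⁻¹ *ᵥ v) = p (ξ ^ 2 • ((B - ξ • 1)⁻¹ *ᵥ v)) := by
        rw [map_smul_eq_mul, norm_pow]
    _ ≤ _ := by
        rw [hR, ← map_smul_eq_mul]
        exact (map_sub_le_add p _ _).trans (add_le_add_left (map_sub_le_add p _ _) _)

theorem sq_norm_mul_resolvent_mulVec_le_inducedOpNorm {d : ℕ} (p₁ p₂ : Seminorm ℂ (Fin d → ℂ))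
    (hp₁ : ∀ x, p₁ x = 0 → x = 0) (hp₂ : ∀ x, p₂ x = 0 → x = 0) (B : Matrix (Fin d) (Fin d) ℂ)
    (ξ : ℂ) (hB : IsUnit (B - ξ • 1)) (v : Fin d → ℂ) :
    ‖ξ‖ ^ 2 * p₁ ((B - ξ • 1)⁻¹ *ᵥ v)
      ≤ (‖ξ‖ + (inducedOpNorm d p₁ p₁ B + inducedOpNorm d p₁ p₂ B * inducedOpNorm d p₂ p₁ B
          * inducedOpNorm d p₂ p₂ (B - ξ • 1)⁻¹)) * p₁ v := by
  set R := (B - ξ • (1 : Matrix (Fin d) (Fin d) ℂ))⁻¹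
  have hBv := le_inducedOpNorm_mul p₁ p₁ B hp₁ v
  have hBRBv : p₁ (B *ᵥ R *ᵥ B *ᵥ v) ≤ inducedOpNorm d p₂ p₁ B
      * (inducedOpNorm d p₂ p₂ R * (inducedOpNorm d p₁ p₂ B * p₁ v)) := by
    have := inducedOpNorm_nonneg p₁ B p₂
    have := inducedOpNorm_nonneg p₂ R p₂
    grw [le_inducedOpNorm_mul p₂ p₁ B hp₂, le_inducedOpNorm_mul p₂ p₂ R hp₂,
      le_inducedOpNorm_mul p₁ p₂ B hp₁]
  linarith [Matrix.sq_norm_mul_resolvent_mulVec_le p₁ B ξ hB v]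

/-- `Nh` plays the role of `‖·‖_#` and `Np` of `‖·‖_+`. -/
theorem smoothing_lemma_general
    (d : ℕ)
    (Nh Np : (Fin d → ℂ) → ℝ)
    (hNhadd : ∀ x y : Fin d → ℂ, Nh (x + y) ≤ Nh x + Nh y)
    (hNhsmul : ∀ (c : ℂ) (x : Fin d → ℂ), Nh (c • x) = ‖c‖ * Nh x)
    (hNhdef : ∀ x : Fin d → ℂ, Nh x = 0 → x = 0)
    (hNpadd : ∀ x y : Fin d → ℂ, Np (x + y) ≤ Np x + Np y)
    (hNpsmul : ∀ (c : ℂ) (x : Fin d → ℂ), Np (c • x) = ‖c‖ * Np x)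
    (hNpdef : ∀ x : Fin d → ℂ, Np x = 0 → x = 0)
    (B : Matrix (Fin d) (Fin d) ℂ) (C : ℝ)
    (hB : inducedOpNorm d Nh Nh B
        + inducedOpNorm d Nh Np B * inducedOpNorm d Np Nh B ≤ C)
    (ξ : ℂ) (hξ : ξ ≠ 0)
    (hinv : IsUnit (B - ξ • (1 : Matrix (Fin d) (Fin d) ℂ))) :
    inducedOpNorm d Nh Nh (B - ξ • (1 : Matrix (Fin d) (Fin d) ℂ))⁻¹
      ≤ 1 / ‖ξ‖ + C / ‖ξ‖ ^ 2
          * (1 + inducedOpNorm d Np Np (B - ξ • (1 : Matrix (Fin d) (Fin d) ℂ))⁻¹) := by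
  let ph : Seminorm ℂ (Fin d → ℂ) := .of Nh hNhadd hNhsmul
  let pp : Seminorm ℂ (Fin d → ℂ) := .of Np hNpadd hNpsmul
  set R := (B - ξ • (1 : Matrix (Fin d) (Fin d) ℂ))⁻¹
  set a := inducedOpNorm d Nh Nh B
  set b := inducedOpNorm d Nh Np B * inducedOpNorm d Np Nh B
  set r := inducedOpNorm d Np Np R
  have ha : 0 ≤ a := inducedOpNorm_nonneg ph B Nh
  have hb : 0 ≤ b := mul_nonneg (inducedOpNorm_nonneg pp B Nh) (inducedOpNorm_nonneg ph B Np)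
  have hr : 0 ≤ r := inducedOpNorm_nonneg pp R Np
  have hcoef : a + b * r ≤ C * (1 + r) := by
    nlinarith [mul_nonneg (sub_nonneg.mpr hB) (by linarith : 0 ≤ 1 + r), mul_nonneg ha hr]
  refine inducedOpNorm_le ph R fun v (hv : Nh v ≤ 1) => ?_
  have key : ‖ξ‖ ^ 2 * Nh (R *ᵥ v) ≤ (‖ξ‖ + (a + b * r)) * Nh v :=
    sq_norm_mul_resolvent_mulVec_le_inducedOpNorm ph pp hNhdef hNpdef B ξ hinv v
  have hv' := mul_le_of_le_one_right (by positivity : 0 ≤ ‖ξ‖ + (a + b * r)) hv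
  calc Nh (R *ᵥ v) ≤ (‖ξ‖ + C * (1 + r)) / ‖ξ‖ ^ 2 := by
        rw [le_div_iff₀' (by positivity)]
        linarith
    _ = _ := by field_simp

/-- The Smoothing Lemma (Lemma C.3 of the paper): resolvent control in one norm can be
upgraded to another norm.  Here `Nh` plays the role of `‖·‖_#` and `Np` of `‖·‖_+`. -/
theorem smoothing_lemma
    (d : ℕ) (hd : 1 ≤ d)
    (Nh Np : (Fin d → ℂ) → ℝ)
    (hNhadd : ∀ x y : Fin d → ℂ, Nh (x + y) ≤ Nh x + Nh y)
    (hNhsmul : ∀ (c : ℂ) (x : Fin d → ℂ), Nh (c • x) = ‖c‖ * Nh x)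
    (hNhdef : ∀ x : Fin d → ℂ, Nh x = 0 → x = 0)
    (hNpadd : ∀ x y : Fin d → ℂ, Np (x + y) ≤ Np x + Np y)
    (hNpsmul : ∀ (c : ℂ) (x : Fin d → ℂ), Np (c • x) = ‖c‖ * Np x)
    (hNpdef : ∀ x : Fin d → ℂ, Np x = 0 → x = 0)
    (B : Matrix (Fin d) (Fin d) ℂ) (C : ℝ) (hC : 0 < C)
    (hB : inducedOpNorm d Nh Nh B
        + inducedOpNorm d Nh Np B * inducedOpNorm d Np Nh B ≤ C)
    (ξ : ℂ) (hξ : ξ ≠ 0)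
    (hinv : IsUnit (B - ξ • (1 : Matrix (Fin d) (Fin d) ℂ))) :
    inducedOpNorm d Nh Nh (B - ξ • (1 : Matrix (Fin d) (Fin d) ℂ))⁻¹
      ≤ 1 / ‖ξ‖ + C / ‖ξ‖ ^ 2
          * (1 + inducedOpNorm d Np Np (B - ξ • (1 : Matrix (Fin d) (Fin d) ℂ))⁻¹) :=
  smoothing_lemma_general d Nh Np hNhadd hNhsmul hNhdef hNpadd hNpsmul hNpdef B C hB ξ hξ hinv
end

section
/- Let d ≥ 1 and ε₁, ε₂, ε₃ ∈ (0,1) with 100·ε₃ ≤ ε₁·ε₂². Let F, T ∈ Matrix d d ℂ be Hermitian with operator norm ‖T‖ ≤ 1. Assume: every eigenvalue λ of F (all eigenvalues of F are real) satisfies λ ∈ {−1} ∪ [−1+ε₁, 1−ε₁] ∪ {1}; the eigenspaces ker(F − 1) and ker(F + 1) are one-dimensional, spanned by unit vectors f₊ and f₋ respectively (F·f₊ = f₊, F·f₋ = −f₋, ‖f₊‖ = ‖f₋‖ = 1); ‖T·f₊‖ ≤ 1 − ε₂; and ‖(1 + T)·f₋‖ ≤ ε₃. Then for every ζ ∈ ℂ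 with |ζ| ≥ 1 − 6ε₃ and |ζ − 1| ≥ 3ε₃, the matrix T·F − ζ·1 is invertible and ‖(T·F − ζ·1)⁻¹‖ ≤ 4/ε₃. -/
/-!
Write `x = b • f₋ + u` with `u ⟂ f₋`. On `f₋ᗮ` the map `T F` shrinks norms by the factor
`1 - 10 ε₃`: splitting `u = a • f₊ + w` with `w ⟂ f₊, f₋`, either `w` is small compared with `a`
and `‖T f₊‖ ≤ 1 - ε₂` gives the gain, or `w` is large and `‖F w‖ ≤ (1 - ε₁) ‖w‖` gives it; the
condition `100 ε₃ ≤ ε₁ ε₂²` balances the two cases. As `T f₋ ≈ -f₋`, the `f₋`-component of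
`(T F - ζ) x` is close to `(1 - ζ) b`, of size at least `ε₃ (2 |b| - ‖u‖)` because
`|ζ - 1| ≥ 3 ε₃`, while its component orthogonal to `f₋` is close to `T F u - ζ u`, of size at least
`ε₃ (4 ‖u‖ - |b|)` because `|ζ| ≥ 1 - 6 ε₃`. Averaging, `‖(T F - ζ) x‖ ≥ ε₃ ‖x‖ / 2`.
-/

open Matrix

/-- The Euclidean norm of a vector in `ℂ^d`. -/
noncomputable def evnorm {d : ℕ} (v : Fin d → ℂ) : ℝ :=
  Real.sqrt (∑ i, ‖v i‖ ^ 2)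

/-- The operator norm of a matrix induced by the Euclidean norm on `ℂ^d`. -/
noncomputable def matOpNorm {d : ℕ} (A : Matrix (Fin d) (Fin d) ℂ) : ℝ :=
  sSup {r : ℝ | ∃ v : Fin d → ℂ, evnorm v ≤ 1 ∧ r = evnorm (A.mulVec v)}

open WithLp
open scoped InnerProductSpace

-- `s`, `q` are the norms of the components `a • f₊` and `w` of `u`, and `N = ‖T F u‖`.
lemma le_one_sub_ten_mul_of_le_of_sq_le {ε₁ ε₂ ε₃ s q μ N : ℝ}
    (hε₁ : ε₁ ∈ Set.Ioo (0 : ℝ) 1) (hε₂ : ε₂ ∈ Set.Ioo (0 : ℝ) 1) (hε₃ : 0 < ε₃)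
    (hεs : 100 * ε₃ ≤ ε₁ * ε₂ ^ 2) (hs : 0 ≤ s) (hq : 0 ≤ q) (hμ : 0 ≤ μ)
    (hμsq : μ ^ 2 = s ^ 2 + q ^ 2)
    (hN : N ≤ (1 - ε₂) * s + (1 - ε₁) * q) (hNsq : N ^ 2 ≤ s ^ 2 + ((1 - ε₁) * q) ^ 2) :
    N ≤ (1 - 10 * ε₃) * μ := by
  obtain ⟨hε₁0, hε₁1⟩ := hε₁
  obtain ⟨hε₂0, hε₂1⟩ := hε₂
  have h20 : 20 * ε₃ ≤ ε₂ := by nlinarith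
  have hsμ : s ≤ μ := by nlinarith
  rcases le_or_gt q (ε₂ / 2 * s) with hcase | hcase
  · nlinarith
  · have hs2 : (ε₂ * s) ^ 2 ≤ (2 * q) ^ 2 :=
      pow_le_pow_left₀ (by positivity) (by linarith) 2
    have hkey : ε₂ ^ 2 * (20 * ε₃ * μ ^ 2) ≤ ε₂ ^ 2 * (ε₁ * q ^ 2) := by
      rw [hμsq]
      nlinarith [mul_le_mul_of_nonneg_left hs2 (by positivity : (0 : ℝ) ≤ 20 * ε₃),
        mul_le_mul_of_nonneg_right hεs (sq_nonneg q),
        mul_le_mul_of_nonneg_right (by nlinarith : ε₂ ^ 2 ≤ 1)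
          (by positivity : (0 : ℝ) ≤ ε₃ * q ^ 2)]
    have hkey' : 20 * ε₃ * μ ^ 2 ≤ ε₁ * q ^ 2 := le_of_mul_le_mul_left hkey (by positivity)
    refine le_of_pow_le_pow_left₀ two_ne_zero (by nlinarith) ?_
    nlinarith [mul_nonneg (mul_nonneg hε₁0.le (by linarith : (0 : ℝ) ≤ 1 - ε₁)) (sq_nonneg q),
      mul_nonneg (sq_nonneg ε₃) (sq_nonneg μ)]

section

variable {𝕜 E : Type*} [RCLike 𝕜] [NormedAddCommGroup E] [InnerProductSpace 𝕜 E]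

lemma LinearMap.IsSymmetric.norm_apply_le_of_inner_eigenvector_eq_zero [FiniteDimensional 𝕜 E]
    {T : E →ₗ[𝕜] E} (hT : T.IsSymmetric) {c : ℝ} (hc : 0 ≤ c) {y : E}
    (hy : ∀ (μ : ℝ) (e : E), T e = (μ : 𝕜) • e → c < |μ| → ⟪e, y⟫_𝕜 = 0) :
    ‖T y‖ ≤ c * ‖y‖ := by
  set b := hT.eigenvectorBasis rfl
  have hterm : ∀ i, ‖⟪b i, T y⟫_𝕜‖ ^ 2 ≤ c ^ 2 * ‖⟪b i, y⟫_𝕜‖ ^ 2 := by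
    intro i
    have hinner : ⟪b i, T y⟫_𝕜 = hT.eigenvalues rfl i * ⟪b i, y⟫_𝕜 := by
      rw [← hT, hT.apply_eigenvectorBasis, inner_smul_left, RCLike.conj_ofReal]
    rw [hinner, norm_mul, mul_pow, RCLike.norm_ofReal]
    rcases le_or_gt |hT.eigenvalues rfl i| c with h | h
    · gcongr
    · simp [hy _ (b i) (hT.apply_eigenvectorBasis rfl i) h]
  refine le_of_pow_le_pow_left₀ two_ne_zero (by positivity) ?_
  rw [mul_pow, ← b.sum_sq_norm_inner_right, ← b.sum_sq_norm_inner_right, Finset.mul_sum]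
  exact Finset.sum_le_sum fun i _ => hterm i

variable (𝕜) in
lemma norm_sq_eq_norm_inner_sq_add_norm_sub_sq {p : E} (hp : ‖p‖ = 1) (y : E) :
    ‖y‖ ^ 2 = ‖⟪p, y⟫_𝕜‖ ^ 2 + ‖y - ⟪p, y⟫_𝕜 • p‖ ^ 2 := by
  rw [Submodule.norm_sq_eq_add_norm_sq_starProjection y (𝕜 ∙ p),
    Submodule.starProjection_orthogonal', _root_.sub_apply,
    Submodule.starProjection_unit_singleton 𝕜 hp, norm_smul, hp, mul_one]
  rfl

lemma inner_sub_inner_smul_self {p : E} (hp : ‖p‖ = 1) (y : E) :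
    ⟪p, y - ⟪p, y⟫_𝕜 • p⟫_𝕜 = 0 := by
  rw [inner_sub_right, inner_smul_right, inner_self_eq_norm_sq_to_K, hp]
  simp

lemma LinearMap.IsSymmetric.inner_eq_zero_of_apply_eq_neg {L : E →ₗ[𝕜] E} (hL : L.IsSymmetric)
    {p m : E} (hp : L p = p) (hm : L m = -m) : ⟪m, p⟫_𝕜 = 0 := by
  have h : ⟪m, p⟫_𝕜 = -⟪m, p⟫_𝕜 := by
    conv_lhs => rw [← hp, ← hL, hm, inner_neg_left]
  linear_combination h / 2

lemma LinearMap.IsSymmetric.norm_apply_sq_eq_of_apply_eq_self {L : E →ₗ[𝕜] E}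
    (hL : L.IsSymmetric) {p : E} (hLp : L p = p) (hp : ‖p‖ = 1) (u : E) :
    ‖L u‖ ^ 2 = ‖⟪p, u⟫_𝕜‖ ^ 2 + ‖L (u - ⟪p, u⟫_𝕜 • p)‖ ^ 2 := by
  have hpLu : ⟪p, L u⟫_𝕜 = ⟪p, u⟫_𝕜 := by rw [← hL, hLp]
  rw [norm_sq_eq_norm_inner_sq_add_norm_sub_sq 𝕜 hp (L u), hpLu, map_sub, map_smul, hLp]

variable {L M : E →ₗ[𝕜] E} {p m : E} {ε₁ ε₂ ε₃ : ℝ}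

lemma norm_apply_sub_inner_smul_le (hp : ‖p‖ = 1) (hmp : ⟪m, p⟫_𝕜 = 0)
    (hLc : ∀ y, ⟪p, y⟫_𝕜 = 0 → ⟪m, y⟫_𝕜 = 0 → ‖L y‖ ≤ (1 - ε₁) * ‖y‖)
    {u : E} (hu : ⟪m, u⟫_𝕜 = 0) :
    ‖L (u - ⟪p, u⟫_𝕜 • p)‖ ≤ (1 - ε₁) * ‖u - ⟪p, u⟫_𝕜 • p‖ :=
  hLc _ (inner_sub_inner_smul_self hp u) (by simp [inner_sub_right, inner_smul_right, hu, hmp])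

lemma norm_apply_le_of_inner_eq_zero (hL : L.IsSymmetric) (hLp : L p = p) (hp : ‖p‖ = 1)
    (hmp : ⟪m, p⟫_𝕜 = 0) (hε₁ : 0 ≤ ε₁)
    (hLc : ∀ y, ⟪p, y⟫_𝕜 = 0 → ⟪m, y⟫_𝕜 = 0 → ‖L y‖ ≤ (1 - ε₁) * ‖y‖)
    {u : E} (hu : ⟪m, u⟫_𝕜 = 0) : ‖L u‖ ≤ ‖u‖ := by
  have hw := norm_apply_sub_inner_smul_le hp hmp hLc hu
  have hw' : ‖L (u - ⟪p, u⟫_𝕜 • p)‖ ≤ ‖u - ⟪p, u⟫_𝕜 • p‖ :=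
    hw.trans (mul_le_of_le_one_left (norm_nonneg _) (by linarith))
  refine le_of_pow_le_pow_left₀ two_ne_zero (norm_nonneg _) ?_
  rw [hL.norm_apply_sq_eq_of_apply_eq_self hLp hp, norm_sq_eq_norm_inner_sq_add_norm_sub_sq 𝕜 hp u]
  gcongr

lemma norm_apply_apply_le_of_inner_eq_zero (hL : L.IsSymmetric) (hLp : L p = p)
    (hp : ‖p‖ = 1) (hmp : ⟪m, p⟫_𝕜 = 0) (hM1 : ∀ y, ‖M y‖ ≤ ‖y‖) (hMp : ‖M p‖ ≤ 1 - ε₂)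
    (hε₁ : ε₁ ∈ Set.Ioo (0 : ℝ) 1) (hε₂ : ε₂ ∈ Set.Ioo (0 : ℝ) 1) (hε₃ : 0 < ε₃)
    (hεs : 100 * ε₃ ≤ ε₁ * ε₂ ^ 2)
    (hLc : ∀ y, ⟪p, y⟫_𝕜 = 0 → ⟪m, y⟫_𝕜 = 0 → ‖L y‖ ≤ (1 - ε₁) * ‖y‖)
    {u : E} (hu : ⟪m, u⟫_𝕜 = 0) : ‖M (L u)‖ ≤ (1 - 10 * ε₃) * ‖u‖ := by
  set a := ⟪p, u⟫_𝕜
  set w := u - a • p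
  have hLw : ‖L w‖ ≤ (1 - ε₁) * ‖w‖ := norm_apply_sub_inner_smul_le hp hmp hLc hu
  have hLu : L u = a • p + L w := by simp only [w, map_sub, map_smul, hLp, add_sub_cancel]
  have hsum : ‖M (L u)‖ ≤ (1 - ε₂) * ‖a‖ + (1 - ε₁) * ‖w‖ := by
    calc ‖M (L u)‖ ≤ ‖a‖ * ‖M p‖ + ‖L w‖ := by
          rw [hLu, map_add, map_smul]
          exact (norm_add_le _ _).trans (by rw [norm_smul]; gcongr; exact hM1 _)
      _ ≤ (1 - ε₂) * ‖a‖ + (1 - ε₁) * ‖w‖ := by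
          rw [mul_comm (1 - ε₂)]; gcongr
  have hsq : ‖M (L u)‖ ^ 2 ≤ ‖a‖ ^ 2 + ((1 - ε₁) * ‖w‖) ^ 2 := by
    calc ‖M (L u)‖ ^ 2 ≤ ‖L u‖ ^ 2 := by gcongr; exact hM1 _
      _ = ‖a‖ ^ 2 + ‖L w‖ ^ 2 := hL.norm_apply_sq_eq_of_apply_eq_self hLp hp u
      _ ≤ ‖a‖ ^ 2 + ((1 - ε₁) * ‖w‖) ^ 2 := by gcongr
  exact le_one_sub_ten_mul_of_le_of_sq_le hε₁ hε₂ hε₃ hεs (norm_nonneg _) (norm_nonneg _)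
    (norm_nonneg _) (norm_sq_eq_norm_inner_sq_add_norm_sub_sq 𝕜 hp u) hsum hsq

lemma inner_apply_apply_sub_smul (hL : L.IsSymmetric) (hLm : L m = -m) (hM : M.IsSymmetric)
    (ζ : 𝕜) (x : E) :
    ⟪m, M (L x) - ζ • x⟫_𝕜 = (1 - ζ) * ⟪m, x⟫_𝕜 + ⟪m + M m, L x⟫_𝕜 := by
  have hmLx : ⟪m, L x⟫_𝕜 = -⟪m, x⟫_𝕜 := by rw [← hL, hLm, inner_neg_left]
  rw [inner_sub_right, inner_smul_right, ← hM, inner_add_left, hmLx]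
  ring

lemma norm_apply_apply_sub_smul_ge_of_component (hL : L.IsSymmetric) (hLm : L m = -m)
    (hM : M.IsSymmetric) (hm : ‖m‖ = 1) (hMm : ‖m + M m‖ ≤ ε₃) {ζ : 𝕜}
    (hζ : 3 * ε₃ ≤ ‖ζ - 1‖) {u : E} (hu : ⟪m, u⟫_𝕜 = 0) (hLu : ‖L u‖ ≤ ‖u‖) (b : 𝕜) :
    ε₃ * (2 * ‖b‖ - ‖u‖) ≤ ‖M (L (b • m + u)) - ζ • (b • m + u)‖ := by
  have hε₃ : 0 ≤ ε₃ := (norm_nonneg _).trans hMm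
  have hb : ⟪m, b • m + u⟫_𝕜 = b := by
    rw [inner_add_right, inner_smul_right, inner_self_eq_norm_sq_to_K, hm, hu]
    simp
  have hLx : ‖L (b • m + u)‖ ≤ ‖b‖ + ‖u‖ := by
    rw [map_add, map_smul, hLm, smul_neg]
    exact (norm_add_le _ _).trans (by rw [norm_neg, norm_smul, hm, mul_one]; gcongr)
  have hcomp : ‖⟪m, M (L (b • m + u)) - ζ • (b • m + u)⟫_𝕜‖ ≤
      ‖M (L (b • m + u)) - ζ • (b • m + u)‖ := by
    simpa [hm] using norm_inner_le_norm (𝕜 := 𝕜) m (M (L (b • m + u)) - ζ • (b • m + u))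
  rw [inner_apply_apply_sub_smul hL hLm hM, hb] at hcomp
  have hlow : ‖(1 - ζ) * b‖ - ‖⟪m + M m, L (b • m + u)⟫_𝕜‖ ≤
      ‖(1 - ζ) * b + ⟪m + M m, L (b • m + u)⟫_𝕜‖ := norm_sub_le_norm_add _ _
  have hrest : ‖⟪m + M m, L (b • m + u)⟫_𝕜‖ ≤ ε₃ * (‖b‖ + ‖u‖) :=
    (norm_inner_le_norm _ _).trans (mul_le_mul hMm hLx (norm_nonneg _) hε₃)
  rw [norm_mul, norm_sub_rev] at hlow
  nlinarith [mul_le_mul_of_nonneg_right hζ (norm_nonneg b)]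

lemma norm_apply_apply_sub_smul_ge_of_orthogonal (hLm : L m = -m) (hMm : ‖m + M m‖ ≤ ε₃)
    {ζ : 𝕜} (hζ : 1 - 6 * ε₃ ≤ ‖ζ‖) {u : E} (hu : ⟪m, u⟫_𝕜 = 0)
    (hMLu : ‖M (L u)‖ ≤ (1 - 10 * ε₃) * ‖u‖) (b : 𝕜) :
    ε₃ * (4 * ‖u‖ - ‖b‖) ≤ ‖M (L (b • m + u)) - ζ • (b • m + u)‖ := by
  set P := (𝕜 ∙ m)ᗮ.starProjection
  have hPm : P m = 0 := Submodule.starProjection_orthogonalComplement_singleton_eq_zero m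
  have hPu : P u = u := by
    rw [Submodule.starProjection_eq_self_iff, Submodule.mem_orthogonal_singleton_iff_inner_right]
    exact hu
  have hPX : P (M (L (b • m + u)) - ζ • (b • m + u)) = P (M (L u)) - b • P (m + M m) - ζ • u := by
    simp only [map_add, map_sub, map_smul, hLm, map_neg, hPm, hPu]
    module
  have hP : ∀ y, ‖P y‖ ≤ ‖y‖ := Submodule.norm_starProjection_apply_le _
  set X := M (L (b • m + u)) - ζ • (b • m + u)
  have hζu : ζ • u = P (M (L u)) - b • P (m + M m) - P X := by rw [hPX]; abel
  have htri : ‖ζ • u‖ ≤ (1 - 10 * ε₃) * ‖u‖ + ‖b‖ * ε₃ + ‖X‖ := by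
    calc ‖ζ • u‖ ≤ ‖P (M (L u))‖ + ‖b‖ * ‖P (m + M m)‖ + ‖P X‖ := by
          rw [hζu, ← norm_smul]
          exact (norm_sub_le _ _).trans (add_le_add_left (norm_sub_le _ _) _)
      _ ≤ (1 - 10 * ε₃) * ‖u‖ + ‖b‖ * ε₃ + ‖X‖ := by
          gcongr
          exacts [(hP _).trans hMLu, (hP _).trans hMm, hP X]
  rw [norm_smul] at htri
  nlinarith [mul_le_mul_of_nonneg_right hζ (norm_nonneg u)]

theorem norm_apply_apply_sub_smul_ge (hL : L.IsSymmetric) (hM : M.IsSymmetric)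
    (hM1 : ∀ y, ‖M y‖ ≤ ‖y‖) (hLp : L p = p) (hLm : L m = -m) (hp : ‖p‖ = 1) (hm : ‖m‖ = 1)
    (hε₁ : ε₁ ∈ Set.Ioo (0 : ℝ) 1) (hε₂ : ε₂ ∈ Set.Ioo (0 : ℝ) 1) (hε₃ : 0 < ε₃)
    (hεs : 100 * ε₃ ≤ ε₁ * ε₂ ^ 2)
    (hLc : ∀ y, ⟪p, y⟫_𝕜 = 0 → ⟪m, y⟫_𝕜 = 0 → ‖L y‖ ≤ (1 - ε₁) * ‖y‖)
    (hMp : ‖M p‖ ≤ 1 - ε₂) (hMm : ‖m + M m‖ ≤ ε₃) {ζ : 𝕜} (hζ₁ : 1 - 6 * ε₃ ≤ ‖ζ‖)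
    (hζ₂ : 3 * ε₃ ≤ ‖ζ - 1‖) (x : E) :
    ε₃ / 2 * ‖x‖ ≤ ‖M (L x) - ζ • x‖ := by
  have hmp : ⟪m, p⟫_𝕜 = 0 := hL.inner_eq_zero_of_apply_eq_neg hLp hLm
  set b := ⟪m, x⟫_𝕜
  set u := x - b • m
  have hx : x = b • m + u := (add_sub_cancel _ _).symm
  have hu : ⟪m, u⟫_𝕜 = 0 := inner_sub_inner_smul_self hm x
  have hLu := norm_apply_le_of_inner_eq_zero hL hLp hp hmp hε₁.1.le hLc hu
  have hMLu := norm_apply_apply_le_of_inner_eq_zero hL hLp hp hmp hM1 hMp hε₁ hε₂ hε₃ hεs hLc hu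
  have hB := norm_apply_apply_sub_smul_ge_of_component hL hLm hM hm hMm hζ₂ hu hLu b
  have hC := norm_apply_apply_sub_smul_ge_of_orthogonal hLm hMm hζ₁ hu hMLu b
  have hxle : ‖x‖ ≤ ‖b‖ + ‖u‖ := by
    conv_lhs => rw [hx]
    exact (norm_add_le _ _).trans (by rw [norm_smul, hm, mul_one])
  rw [← hx] at hB hC
  nlinarith [norm_nonneg u]

end

section Matrix

lemma evnorm_eq_norm {d : ℕ} (v : Fin d → ℂ) : evnorm v = ‖toLp 2 v‖ :=
  (EuclideanSpace.norm_eq _).symm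

lemma matOpNorm_eq_norm_toEuclideanCLM {d : ℕ} (A : Matrix (Fin d) (Fin d) ℂ) :
    matOpNorm A = ‖toEuclideanCLM (n := Fin d) (𝕜 := ℂ) A‖ := by
  rw [← ContinuousLinearMap.sSup_unitClosedBall_eq_norm, matOpNorm]
  congr 1
  ext r
  simp only [Set.mem_ofPred_eq, Set.mem_image, Metric.mem_closedBall, dist_zero_right]
  constructor
  · rintro ⟨v, hv, rfl⟩
    exact ⟨toLp 2 v, by rwa [← evnorm_eq_norm], by simp [evnorm_eq_norm]⟩
  · rintro ⟨x, hx, rfl⟩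
    exact ⟨ofLp x, by rwa [evnorm_eq_norm], by rw [evnorm_eq_norm]; rfl⟩

lemma norm_toEuclideanLin_apply_le {d : ℕ} (A : Matrix (Fin d) (Fin d) ℂ)
    (x : EuclideanSpace ℂ (Fin d)) : ‖toEuclideanLin A x‖ ≤ matOpNorm A * ‖x‖ :=
  matOpNorm_eq_norm_toEuclideanCLM A ▸ (toEuclideanCLM (n := Fin d) (𝕜 := ℂ) A).le_opNorm x

lemma Matrix.toEuclideanLin_mul_sub_smul_one_apply {n 𝕜 : Type*} [RCLike 𝕜] [Fintype n]
    [DecidableEq n] (A B : Matrix n n 𝕜) (ζ : 𝕜) (x : EuclideanSpace 𝕜 n) :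
    toEuclideanLin (A * B - ζ • 1) x = toEuclideanLin A (toEuclideanLin B x) - ζ • x := by
  change toLp 2 ((A * B - ζ • 1) *ᵥ ofLp x) = toLp 2 (A *ᵥ (B *ᵥ ofLp x)) - ζ • x
  rw [sub_mulVec, smul_mulVec, one_mulVec, ← mulVec_mulVec]
  rfl

lemma Matrix.isUnit_and_norm_toEuclideanCLM_inv_le {n 𝕜 : Type*} [RCLike 𝕜] [Fintype n]
    [DecidableEq n] {A : Matrix n n 𝕜} {c : ℝ} (hc : 0 < c)
    (hA : ∀ x, c * ‖x‖ ≤ ‖toEuclideanLin A x‖) :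
    IsUnit A ∧ ‖toEuclideanCLM (n := n) (𝕜 := 𝕜) A⁻¹‖ ≤ c⁻¹ := by
  have hinj : Function.Injective A.mulVec := by
    intro v w hvw
    have h : c * ‖toLp 2 (v - w)‖ ≤ ‖toLp 2 (A *ᵥ (v - w))‖ := hA _
    rw [mulVec_sub, hvw, sub_self, toLp_zero, norm_zero] at h
    have : ‖toLp 2 (v - w)‖ = 0 := le_antisymm (nonpos_of_mul_nonpos_right h hc) (norm_nonneg _)
    simpa [sub_eq_zero] using this
  have hunit : IsUnit A := mulVec_injective_iff_isUnit.mp hinj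
  refine ⟨hunit, ContinuousLinearMap.opNorm_le_bound _ (by positivity) fun y => ?_⟩
  have hy : toEuclideanLin A (toEuclideanCLM (n := n) (𝕜 := 𝕜) A⁻¹ y) = y := by
    change toEuclideanCLM (n := n) (𝕜 := 𝕜) A (toEuclideanCLM (n := n) (𝕜 := 𝕜) A⁻¹ y) = y
    rw [← mul_apply_eq_comp, ← map_mul, mul_nonsing_inv _ ((isUnit_iff_isUnit_det A).mp hunit),
      map_one]
    rfl
  have := hA (toEuclideanCLM (n := n) (𝕜 := 𝕜) A⁻¹ y)
  rw [hy] at this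
  rwa [inv_mul_eq_div, le_div_iff₀' hc]

lemma Matrix.IsHermitian.norm_toEuclideanLin_le {d : ℕ} {F : Matrix (Fin d) (Fin d) ℂ}
    (hF : F.IsHermitian) {ε₁ : ℝ} (hε₁ : ε₁ ≤ 1)
    (hspec : ∀ μ : ℝ, (∃ v : Fin d → ℂ, v ≠ 0 ∧ F.mulVec v = (μ : ℂ) • v) →
      μ = -1 ∨ (-1 + ε₁ ≤ μ ∧ μ ≤ 1 - ε₁) ∨ μ = 1)
    {fp fm : Fin d → ℂ}
    (hkerp : ∀ v : Fin d → ℂ, F.mulVec v = v → ∃ c : ℂ, v = c • fp)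
    (hkerm : ∀ v : Fin d → ℂ, F.mulVec v = -v → ∃ c : ℂ, v = c • fm)
    {y : EuclideanSpace ℂ (Fin d)} (hyp : ⟪toLp 2 fp, y⟫_ℂ = 0) (hym : ⟪toLp 2 fm, y⟫_ℂ = 0) :
    ‖toEuclideanLin F y‖ ≤ (1 - ε₁) * ‖y‖ := by
  refine (isSymmetric_toEuclideanLin_iff.mpr hF).norm_apply_le_of_inner_eigenvector_eq_zero
    (by linarith) fun μ e he hμ => ?_
  have hFe : F *ᵥ ofLp e = (μ : ℂ) • ofLp e := congrArg ofLp he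
  rcases eq_or_ne e 0 with rfl | hne
  · exact inner_zero_left _
  rcases hspec μ ⟨ofLp e, by simpa using hne, hFe⟩ with rfl | hμ' | rfl
  · obtain ⟨c, hc⟩ := hkerm _ (by simpa using hFe)
    rw [← toLp_ofLp 2 e, hc, toLp_smul, inner_smul_left, hym, mul_zero]
  · exact absurd (abs_le.2 ⟨by linarith, hμ'.2⟩) (not_le.2 hμ)
  · obtain ⟨c, hc⟩ := hkerp _ (by simpa using hFe)
    rw [← toLp_ofLp 2 e, hc, toLp_smul, inner_smul_left, hyp, mul_zero]

end Matrix

theorem TF_stability_resolvent_bound_general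
    (d : ℕ)
    (ε₁ ε₂ ε₃ : ℝ)
    (hε₁ : ε₁ ∈ Set.Ioo (0 : ℝ) 1) (hε₂ : ε₂ ∈ Set.Ioo (0 : ℝ) 1)
    (hε₃ : ε₃ ∈ Set.Ioo (0 : ℝ) 1)
    (hεs : 100 * ε₃ ≤ ε₁ * ε₂ ^ 2)
    (F T : Matrix (Fin d) (Fin d) ℂ)
    (hF : F.IsHermitian) (hT : T.IsHermitian)
    (hTnorm : matOpNorm T ≤ 1)
    (hspec : ∀ μ : ℝ, (∃ v : Fin d → ℂ, v ≠ 0 ∧ F.mulVec v = (μ : ℂ) • v) →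
      μ = -1 ∨ (-1 + ε₁ ≤ μ ∧ μ ≤ 1 - ε₁) ∨ μ = 1)
    (fp fm : Fin d → ℂ)
    (hfp : F.mulVec fp = fp) (hfm : F.mulVec fm = -fm)
    (hfpnorm : evnorm fp = 1) (hfmnorm : evnorm fm = 1)
    (hkerp : ∀ v : Fin d → ℂ, F.mulVec v = v → ∃ c : ℂ, v = c • fp)
    (hkerm : ∀ v : Fin d → ℂ, F.mulVec v = -v → ∃ c : ℂ, v = c • fm)
    (hTfp : evnorm (T.mulVec fp) ≤ 1 - ε₂)
    (hTfm : evnorm (((1 : Matrix (Fin d) (Fin d) ℂ) + T).mulVec fm) ≤ ε₃) :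
    ∀ ζ : ℂ, 1 - 6 * ε₃ ≤ ‖ζ‖ → 3 * ε₃ ≤ ‖ζ - 1‖ →
      IsUnit (T * F - ζ • (1 : Matrix (Fin d) (Fin d) ℂ))
        ∧ matOpNorm (T * F - ζ • (1 : Matrix (Fin d) (Fin d) ℂ))⁻¹ ≤ 4 / ε₃ := by
  intro ζ hζ₁ hζ₂
  have hL := isSymmetric_toEuclideanLin_iff.mpr hF
  have hM := isSymmetric_toEuclideanLin_iff.mpr hT
  have hM1 : ∀ y, ‖toEuclideanLin T y‖ ≤ ‖y‖ := fun y =>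
    (norm_toEuclideanLin_apply_le T y).trans (mul_le_of_le_one_left (norm_nonneg y) hTnorm)
  rw [evnorm_eq_norm] at hfpnorm hfmnorm hTfp hTfm
  rw [add_mulVec, one_mulVec] at hTfm
  have hbound : ∀ x, ε₃ / 2 * ‖x‖ ≤ ‖toEuclideanLin (T * F - ζ • 1) x‖ := fun x => by
    rw [toEuclideanLin_mul_sub_smul_one_apply]
    exact norm_apply_apply_sub_smul_ge hL hM hM1 (congrArg (toLp 2) hfp)
      (congrArg (toLp 2) hfm) hfpnorm hfmnorm hε₁ hε₂ hε₃.1 hεs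
      (fun _ => hF.norm_toEuclideanLin_le hε₁.2.le hspec hkerp hkerm) hTfp hTfm hζ₁ hζ₂ x
  obtain ⟨hunit, hinv⟩ := isUnit_and_norm_toEuclideanCLM_inv_le (half_pos hε₃.1) hbound
  refine ⟨hunit, (matOpNorm_eq_norm_toEuclideanCLM _).trans_le (hinv.trans ?_)⟩
  rw [inv_div]
  exact div_le_div_of_nonneg_right (by norm_num) hε₃.1.le

/-- The resolvent bound (C.10) of the TF-Stability Lemma (Lemma C.4 of the paper). -/
theorem TF_stability_resolvent_bound
    (d : ℕ) (hd : 1 ≤ d)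
    (ε₁ ε₂ ε₃ : ℝ)
    (hε₁ : ε₁ ∈ Set.Ioo (0 : ℝ) 1) (hε₂ : ε₂ ∈ Set.Ioo (0 : ℝ) 1)
    (hε₃ : ε₃ ∈ Set.Ioo (0 : ℝ) 1)
    (hεs : 100 * ε₃ ≤ ε₁ * ε₂ ^ 2)
    (F T : Matrix (Fin d) (Fin d) ℂ)
    (hF : F.IsHermitian) (hT : T.IsHermitian)
    (hTnorm : matOpNorm T ≤ 1)
    (hspec : ∀ μ : ℝ, (∃ v : Fin d → ℂ, v ≠ 0 ∧ F.mulVec v = (μ : ℂ) • v) →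
      μ = -1 ∨ (-1 + ε₁ ≤ μ ∧ μ ≤ 1 - ε₁) ∨ μ = 1)
    (fp fm : Fin d → ℂ)
    (hfp : F.mulVec fp = fp) (hfm : F.mulVec fm = -fm)
    (hfpnorm : evnorm fp = 1) (hfmnorm : evnorm fm = 1)
    (hkerp : ∀ v : Fin d → ℂ, F.mulVec v = v → ∃ c : ℂ, v = c • fp)
    (hkerm : ∀ v : Fin d → ℂ, F.mulVec v = -v → ∃ c : ℂ, v = c • fm)
    (hTfp : evnorm (T.mulVec fp) ≤ 1 - ε₂)
    (hTfm : evnorm (((1 : Matrix (Fin d) (Fin d) ℂ) + T).mulVec fm) ≤ ε₃) :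
    ∀ ζ : ℂ, 1 - 6 * ε₃ ≤ ‖ζ‖ → 3 * ε₃ ≤ ‖ζ - 1‖ →
      IsUnit (T * F - ζ • (1 : Matrix (Fin d) (Fin d) ℂ))
        ∧ matOpNorm (T * F - ζ • (1 : Matrix (Fin d) (Fin d) ℂ))⁻¹ ≤ 4 / ε₃ :=
  TF_stability_resolvent_bound_general d ε₁ ε₂ ε₃ hε₁ hε₂ hε₃ hεs F T hF hT hTnorm hspec fp fm hfp
    hfm hfpnorm hfmnorm hkerp hkerm hTfp hTfm
end

section
/- For all real δ, C₁, C₂ > 0 there exists ε > 0 (depending only on δ, C₁, C₂) with the following property. Let p, q ≥ 1, let ‖·‖_A be a norm on ℂ^p and ‖·‖_D a norm on ℂ^q, and let T : ℂ^p × ℂ^q → ℂ^p be continuously differentiable with T(0,0) = 0. Denote by D₁T(a,d) and D₂T(a,d) the partial Fréchet derivatives of T at (a,d) in the first and second variable, and equip linear maps with the operator norms induced by ‖·‖_A and ‖·‖_D. Assume D₁T(0,0) is invertible and: (i) ‖Id − (D₁T(0,0))⁻¹ ∘ D₁T(a,d)‖ ≤ 1/2 for all (a,d) with ‖a‖_A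 < δ and ‖d‖_D < δ; (ii) ‖(D₁T(0,0))⁻¹‖ ≤ C₁; (iii) ‖D₂T(a,d)‖ ≤ C₂ for all (a,d) with ‖a‖_A < δ and ‖d‖_D < δ. Then there is a unique function f from {d : ‖d‖_D < ε} to {a : ‖a‖_A < δ} such that T(f(d), d) = 0 for all d with ‖d‖_D < ε; moreover f is continuously differentiable, and if T is analytic then f is analytic. -/
/-!
For fixed `d`, the zeros of `T (·, d)` are the fixed points of the chord map
`x ↦ x - J (T (x, d))`. Hypothesis (i) and the mean value inequality make it a `1/2`-contraction
on the `δ`-ball, and (ii), (iii) show that it moves `0` by at most `C₁ C₂ ‖d‖ ≤ δ / 4` once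
`‖d‖ < ε := min δ (δ / (4 C₁ C₂))`. So it maps the closed `δ/2`-ball into itself, and Banach's
fixed point theorem yields a zero `f d`, unique in the `δ`-ball. Hypothesis (i) also makes
`D₁T (f d, d)` invertible, so the classical implicit function theorem gives a local solution as
smooth as `T`, which agrees with `f` by uniqueness.

The given norms are put on type synonyms of `ℂ^p` and `ℂ^q`. All norms on a finite-dimensional
space are equivalent, so this changes neither differentiability nor analyticity, and `opN` becomes
the usual operator norm.
-/

open Matrix

/-- Operator norm of a map `ℂ^p → ℂ^q` induced by the norms `N1` (domain)
and `N2` (codomain). -/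
noncomputable def opN {p q : ℕ} (N1 : (Fin p → ℂ) → ℝ) (N2 : (Fin q → ℂ) → ℝ)
    (f : (Fin p → ℂ) → (Fin q → ℂ)) : ℝ :=
  sSup {r : ℝ | ∃ v : Fin p → ℂ, N1 v ≤ 1 ∧ r = N2 (f v)}

/-- Partial Fréchet derivative of `T : ℂ^p × ℂ^q → ℂ^p` in the first variable. -/
noncomputable def pderiv1 {p q : ℕ} (T : (Fin p → ℂ) × (Fin q → ℂ) → (Fin p → ℂ))
    (a : Fin p → ℂ) (d : Fin q → ℂ) : (Fin p → ℂ) →L[ℝ] (Fin p → ℂ) :=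
  fderiv ℝ (fun x => T (x, d)) a

/-- Partial Fréchet derivative of `T : ℂ^p × ℂ^q → ℂ^p` in the second variable. -/
noncomputable def pderiv2 {p q : ℕ} (T : (Fin p → ℂ) × (Fin q → ℂ) → (Fin p → ℂ))
    (a : Fin p → ℂ) (d : Fin q → ℂ) : (Fin q → ℂ) →L[ℝ] (Fin p → ℂ) :=
  fderiv ℝ (fun y => T (a, y)) d

open Set Filter Topology Metric Function NNReal
open scoped ContDiff

section FixedPoint

variable {α : Type*} [MetricSpace α] {Φ : α → α} {K : ℝ≥0}

theorem exists_isFixedPt_mem_closedBall [CompleteSpace α] {x : α} {r : ℝ} (hK : K < 1)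
    (hΦ : LipschitzOnWith K Φ (closedBall x r)) (hx : dist (Φ x) x ≤ (1 - K) * r) :
    ∃ y ∈ closedBall x r, IsFixedPt Φ y := by
  have hK' : (0 : ℝ) < 1 - K := sub_pos.2 (by exact_mod_cast hK)
  have hr : 0 ≤ r := nonneg_of_mul_nonneg_right (dist_nonneg.trans hx) hK'
  have hmaps : MapsTo Φ (closedBall x r) (closedBall x r) := fun y hy => by
    rw [mem_closedBall] at hy ⊢
    calc dist (Φ y) x ≤ dist (Φ y) (Φ x) + dist (Φ x) x := dist_triangle _ _ _
      _ ≤ K * dist y x + (1 - K) * r :=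
          add_le_add (hΦ.dist_le_mul y hy x (mem_closedBall_self hr)) hx
      _ ≤ K * r + (1 - K) * r := by gcongr
      _ = r := by ring
  obtain ⟨y, hy, hfix, -⟩ := ContractingWith.exists_fixedPoint' isClosed_closedBall.isComplete
    hmaps ⟨hK, hΦ.mapsToRestrict hmaps⟩ (mem_closedBall_self hr) (edist_ne_top _ _)
  exact ⟨y, hy, hfix⟩

theorem LipschitzOnWith.eq_of_isFixedPt {s : Set α} (hK : K < 1) (hΦ : LipschitzOnWith K Φ s)
    {x y : α} (hx : x ∈ s) (hy : y ∈ s) (hfx : IsFixedPt Φ x) (hfy : IsFixedPt Φ y) : x = y := by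
  have h := hΦ.dist_le_mul x hx y hy
  rw [hfx.eq, hfy.eq] at h
  have hK' : (K : ℝ) < 1 := by exact_mod_cast hK
  exact dist_le_zero.1 (by nlinarith [dist_nonneg (x := x) (y := y)])

end FixedPoint

theorem ContinuousLinearEquiv.fderiv_conj {V W V' W' : Type*} [NormedAddCommGroup V]
    [NormedSpace ℝ V] [NormedAddCommGroup W] [NormedSpace ℝ W] [NormedAddCommGroup V']
    [NormedSpace ℝ V'] [NormedAddCommGroup W'] [NormedSpace ℝ W']
    (eV : V ≃L[ℝ] V') (eW : W ≃L[ℝ] W') (g : V → W) (x : V') :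
    fderiv ℝ (eW ∘ g ∘ eV.symm) x = (eW : W →L[ℝ] W') ∘L fderiv ℝ g (eV.symm x) ∘L eV.symm := by
  rw [eW.comp_fderiv, eV.symm.comp_right_fderiv]

section Implicit

variable {E : Type*} [NormedAddCommGroup E] [NormedSpace ℝ E]
  {F : Type*} [NormedAddCommGroup F] [NormedSpace ℝ F]
  {G : Type*} [NormedAddCommGroup G] [NormedSpace ℝ G]

theorem ContinuousLinearMap.isInvertible_of_norm_id_sub_comp_lt_one [CompleteSpace E]
    {J B D : E →L[ℝ] E} (hJB : J ∘L B = .id ℝ E) (hBJ : B ∘L J = .id ℝ E)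
    (hD : ‖.id ℝ E - J ∘L D‖ < 1) : D.IsInvertible := by
  have hJD : IsUnit (J ∘L D) := by
    simpa [ContinuousLinearMap.one_def] using isUnit_one_sub_of_norm_lt_one hD
  have hD_eq : D = B ∘L (J ∘L D) := by
    rw [← ContinuousLinearMap.comp_assoc, hBJ, ContinuousLinearMap.id_comp]
  rw [hD_eq]
  exact (IsInvertible.of_inverse hBJ hJB).comp ⟨ContinuousLinearEquiv.unitsEquiv ℝ E hJD.unit, rfl⟩

theorem contDiffAt_of_eventually_unique_zero [CompleteSpace E] [CompleteSpace F] [CompleteSpace G]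
    {n : ℕ∞ω} {T : E × F → G} {f : F → E} {d₀ : F}
    (hT : ContDiffAt ℝ n T (f d₀, d₀)) (hn : n ≠ 0)
    (hinv : (fderiv ℝ (fun x => T (x, d₀)) (f d₀)).IsInvertible)
    (huniq : ∀ᶠ p in 𝓝 (f d₀, d₀), T p = T (f d₀, d₀) → p.1 = f p.2) :
    ContDiffAt ℝ n f d₀ := by
  set S : F × E → G := T ∘ Prod.swap
  have hS : ContDiffAt ℝ n S (d₀, f d₀) :=
    hT.comp (d₀, f d₀) (contDiff_snd.prodMk contDiff_fst).contDiffAt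
  have hinvS : (fderiv ℝ S (d₀, f d₀) ∘L .inr ℝ F E).IsInvertible := by
    have h := ((hS.differentiableAt hn).hasFDerivAt.comp (f d₀)
      (hasFDerivAt_prodMk_right d₀ (f d₀))).fderiv
    exact h ▸ hinv
  set ψ := hS.implicitFunction hn hinvS
  have hψ₀ : ψ d₀ = f d₀ := hS.implicitFunction_apply_self hn hinvS
  have hψ : ContDiffAt ℝ n ψ d₀ := hS.contDiffAt_implicitFunction hn hinvS
  have htend : Tendsto (fun d => (ψ d, d)) (𝓝 d₀) (𝓝 (f d₀, d₀)) :=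
    hψ₀ ▸ hψ.continuousAt.tendsto.prodMk_nhds tendsto_id
  have hψf : ψ =ᶠ[𝓝 d₀] f := by
    filter_upwards [htend.eventually huniq, hS.eventually_apply_implicitFunction hn hinvS]
      with d hd hψd
    exact hd hψd
  exact hψ.congr_of_eventuallyEq hψf.symm

def chordMap (J : E →L[ℝ] E) (g : E → E) (x : E) : E := x - J (g x)

theorem isFixedPt_chordMap_iff {J : E →L[ℝ] E} (hJ : Injective J) {g : E → E} {x : E} :
    IsFixedPt (chordMap J g) x ↔ g x = 0 := by
  rw [IsFixedPt, chordMap, sub_eq_self, map_eq_zero_iff J hJ]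

theorem lipschitzOnWith_chordMap {J : E →L[ℝ] E} {g : E → E} {s : Set E} {K : ℝ≥0}
    (hs : Convex ℝ s) (hg : ∀ x ∈ s, DifferentiableAt ℝ g x)
    (hK : ∀ x ∈ s, ‖.id ℝ E - J ∘L fderiv ℝ g x‖ ≤ K) :
    LipschitzOnWith K (chordMap J g) s :=
  hs.lipschitzOnWith_of_nnnorm_hasFDerivWithin_le (fun x hx =>
      ((hasFDerivAt_id x).sub (J.hasFDerivAt.comp x (hg x hx).hasFDerivAt)).hasFDerivWithinAt)
    fun x hx => by exact_mod_cast hK x hx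

theorem exists_mem_closedBall_eq_zero_of_norm_id_sub_le [CompleteSpace E] {J : E →L[ℝ] E}
    (hJ : Injective J) {g : E → E} {K : ℝ≥0} {r : ℝ} (hK : K < 1)
    (hg : ∀ x ∈ closedBall (0 : E) r, DifferentiableAt ℝ g x)
    (hgK : ∀ x ∈ closedBall (0 : E) r, ‖.id ℝ E - J ∘L fderiv ℝ g x‖ ≤ K)
    (hg₀ : ‖J (g 0)‖ ≤ (1 - K) * r) :
    ∃ a ∈ closedBall (0 : E) r, g a = 0 := by
  obtain ⟨a, ha, hfix⟩ := exists_isFixedPt_mem_closedBall hK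
    (lipschitzOnWith_chordMap (convex_closedBall 0 r) hg hgK)
    (by simpa [chordMap] using hg₀)
  exact ⟨a, ha, (isFixedPt_chordMap_iff hJ).1 hfix⟩

theorem eq_of_eq_zero_of_norm_id_sub_le {J : E →L[ℝ] E} (hJ : Injective J)
    {g : E → E} {K : ℝ≥0} {s : Set E} (hK : K < 1) (hs : Convex ℝ s)
    (hg : ∀ x ∈ s, DifferentiableAt ℝ g x) (hgK : ∀ x ∈ s, ‖.id ℝ E - J ∘L fderiv ℝ g x‖ ≤ K)
    {a b : E} (ha : a ∈ s) (hb : b ∈ s) (hga : g a = 0) (hgb : g b = 0) : a = b :=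
  (lipschitzOnWith_chordMap hs hg hgK).eq_of_isFixedPt hK ha hb
    ((isFixedPt_chordMap_iff hJ).2 hga) ((isFixedPt_chordMap_iff hJ).2 hgb)

section NormBounds

variable [CompleteSpace E] {T : E × F → E} {J : E →L[ℝ] E} {δ ε C₁ C₂ : ℝ}

theorem exists_zeros_of_norm_bounds (hδ : 0 < δ) (hεδ : ε ≤ δ) (hεC : C₁ * C₂ * ε ≤ δ / 4)
    (hT : Differentiable ℝ T) (hT₀ : T (0, 0) = 0) (hJ : Injective J)
    (h₁ : ∀ a d, ‖a‖ < δ → ‖d‖ < δ → ‖.id ℝ E - J ∘L fderiv ℝ (fun x => T (x, d)) a‖ ≤ 1 / 2)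
    (hJC : ‖J‖ ≤ C₁)
    (h₂ : ∀ a d, ‖a‖ < δ → ‖d‖ < δ → ‖fderiv ℝ (fun y => T (a, y)) d‖ ≤ C₂) :
    ∃ f : F → E,
      (∀ d ∈ ball (0 : F) ε, f d ∈ closedBall (0 : E) (δ / 2) ∧ T (f d, d) = 0) ∧
      (∀ d ∈ ball (0 : F) ε, ∀ a ∈ ball (0 : E) δ, T (a, d) = 0 → a = f d) := by
  have hd₁ : ∀ a d, DifferentiableAt ℝ (fun x => T (x, d)) a := fun a d =>
    (hT _).comp a (differentiableAt_id.prodMk (differentiableAt_const d))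
  have hd₂ : ∀ a d, DifferentiableAt ℝ (fun y => T (a, y)) d := fun a d =>
    (hT _).comp d ((differentiableAt_const a).prodMk differentiableAt_id)
  have hK : ((1 / 2 : ℝ≥0) : ℝ) = 1 / 2 := by norm_num
  have hcontr : ∀ d ∈ ball (0 : F) ε, ∀ a ∈ ball (0 : E) δ,
      ‖.id ℝ E - J ∘L fderiv ℝ (fun x => T (x, d)) a‖ ≤ (1 / 2 : ℝ≥0) := fun d hd a ha =>
    hK ▸ h₁ a d (mem_ball_zero_iff.1 ha) ((mem_ball_zero_iff.1 hd).trans_le hεδ)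
  have hres : ∀ d ∈ ball (0 : F) ε, ‖J (T (0, d))‖ ≤ δ / 4 := fun d hd => by
    have h0 : (0 : F) ∈ ball 0 δ := mem_ball_self hδ
    have hmv := (convex_ball (0 : F) δ).norm_image_sub_le_of_norm_fderiv_le
      (fun y _ => hd₂ 0 y) (fun y hy => h₂ 0 y (by simpa using hδ) (mem_ball_zero_iff.1 hy))
      h0 (ball_subset_ball hεδ hd)
    rw [hT₀, sub_zero, sub_zero] at hmv
    have hC₁ : 0 ≤ C₁ := (norm_nonneg J).trans hJC
    have hC₂ : 0 ≤ C₂ := (norm_nonneg _).trans (h₂ 0 0 (by simpa using hδ) (by simpa using hδ))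
    calc ‖J (T (0, d))‖ ≤ C₁ * (C₂ * ‖d‖) := J.le_of_opNorm_le hJC _ |>.trans (by gcongr)
      _ ≤ C₁ * C₂ * ε := by rw [← mul_assoc]; gcongr; exact (mem_ball_zero_iff.1 hd).le
      _ ≤ δ / 4 := hεC
  have hball : closedBall (0 : E) (δ / 2) ⊆ ball 0 δ := closedBall_subset_ball (by linarith)
  have hex : ∀ d ∈ ball (0 : F) ε, ∃ a ∈ closedBall (0 : E) (δ / 2), T (a, d) = 0 :=
    fun d hd => exists_mem_closedBall_eq_zero_of_norm_id_sub_le hJ (by norm_num)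
      (fun x _ => hd₁ x d) (fun x hx => hcontr d hd x (hball hx))
      (by rw [hK]; linarith [hres d hd])
  choose! f hf_mem hf_zero using hex
  refine ⟨f, fun d hd => ⟨hf_mem d hd, hf_zero d hd⟩, fun d hd a ha hTa => ?_⟩
  exact eq_of_eq_zero_of_norm_id_sub_le hJ (by norm_num) (convex_ball 0 δ) (fun x _ => hd₁ x d)
    (hcontr d hd) ha (hball (hf_mem d hd)) hTa (hf_zero d hd)

theorem contDiffOn_of_unique_zeros [CompleteSpace F] {n : ℕ∞ω} {f : F → E} {s : Set F}
    {U : Set E} (hn : n ≠ 0) (hT : ContDiff ℝ n T)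
    (hJ₁ : J ∘L fderiv ℝ (fun x => T (x, 0)) 0 = .id ℝ E)
    (hJ₂ : fderiv ℝ (fun x => T (x, 0)) 0 ∘L J = .id ℝ E)
    (hs : IsOpen s) (hU : IsOpen U) (hf : ∀ d ∈ s, f d ∈ U ∧ T (f d, d) = 0)
    (huniq : ∀ d ∈ s, ∀ a ∈ U, T (a, d) = 0 → a = f d)
    (hJf : ∀ d ∈ s, ‖.id ℝ E - J ∘L fderiv ℝ (fun x => T (x, d)) (f d)‖ < 1) :
    ContDiffOn ℝ n f s := fun d hd => by
  refine (contDiffAt_of_eventually_unique_zero hT.contDiffAt hn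
    (ContinuousLinearMap.isInvertible_of_norm_id_sub_comp_lt_one hJ₁ hJ₂ (hJf d hd))
    ?_).contDiffWithinAt
  filter_upwards [(hU.prod hs).mem_nhds (show (f d, d) ∈ U ×ˢ s from ⟨(hf d hd).1, hd⟩)]
    with p hp hTp
  exact huniq p.2 hp.2 p.1 hp.1 (hTp.trans (hf d hd).2)

theorem exists_implicitFunction_of_norm_bounds [CompleteSpace F] (hδ : 0 < δ) (hεδ : ε ≤ δ)
    (hεC : C₁ * C₂ * ε ≤ δ / 4) (hT : ContDiff ℝ 1 T) (hT₀ : T (0, 0) = 0)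
    (hJ₁ : J ∘L fderiv ℝ (fun x => T (x, 0)) 0 = .id ℝ E)
    (hJ₂ : fderiv ℝ (fun x => T (x, 0)) 0 ∘L J = .id ℝ E)
    (h₁ : ∀ a d, ‖a‖ < δ → ‖d‖ < δ → ‖.id ℝ E - J ∘L fderiv ℝ (fun x => T (x, d)) a‖ ≤ 1 / 2)
    (hJC : ‖J‖ ≤ C₁)
    (h₂ : ∀ a d, ‖a‖ < δ → ‖d‖ < δ → ‖fderiv ℝ (fun y => T (a, y)) d‖ ≤ C₂) :
    ∃ f : F → E,
      (∀ d ∈ ball (0 : F) ε, f d ∈ ball (0 : E) δ ∧ T (f d, d) = 0) ∧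
      (∀ d ∈ ball (0 : F) ε, ∀ a ∈ ball (0 : E) δ, T (a, d) = 0 → a = f d) ∧
      ∀ n : ℕ∞ω, n ≠ 0 → ContDiff ℝ n T → ContDiffOn ℝ n f (ball 0 ε) := by
  have hJ : Injective J :=
    LeftInverse.injective (g := fderiv ℝ (fun x => T (x, 0)) 0) fun x => congr($hJ₂ x)
  obtain ⟨f, hf, huniq⟩ := exists_zeros_of_norm_bounds hδ hεδ hεC
    (hT.differentiable one_ne_zero) hT₀ hJ h₁ hJC h₂
  have hf' : ∀ d ∈ ball (0 : F) ε, f d ∈ ball (0 : E) δ ∧ T (f d, d) = 0 := fun d hd =>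
    ⟨closedBall_subset_ball (by linarith) (hf d hd).1, (hf d hd).2⟩
  refine ⟨f, hf', huniq, fun n hn hTn =>
    contDiffOn_of_unique_zeros hn hTn hJ₁ hJ₂ isOpen_ball isOpen_ball hf' huniq fun d hd => ?_⟩
  exact (h₁ _ _ (mem_ball_zero_iff.1 (hf' d hd).1)
    ((mem_ball_zero_iff.1 hd).trans_le hεδ)).trans_lt (by norm_num)

end NormBounds

end Implicit

/-- A copy of `V` normed by `N`; indexing it by `N` lets the instances below read the norm off
the type. -/
def Renormed {V : Type*} (_N : V → ℝ) : Type _ := V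

structure IsComplexNorm {V : Type*} [AddCommGroup V] [Module ℂ V] (N : V → ℝ) : Prop where
  add_le : ∀ x y, N (x + y) ≤ N x + N y
  smul_eq : ∀ (c : ℂ) x, N (c • x) = ‖c‖ * N x
  eq_zero : ∀ x, N x = 0 → x = 0

namespace IsComplexNorm

variable {V : Type*} [AddCommGroup V] [Module ℂ V] {N : V → ℝ}

theorem map_zero (hN : IsComplexNorm N) : N 0 = 0 := by
  simpa using hN.smul_eq 0 0

theorem map_neg (hN : IsComplexNorm N) (x : V) : N (-x) = N x := by
  simpa using hN.smul_eq (-1) x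

end IsComplexNorm

namespace Renormed

section Norm

variable {V : Type*} [AddCommGroup V] [Module ℂ V] {N : V → ℝ}

instance : AddCommGroup (Renormed N) := inferInstanceAs (AddCommGroup V)

instance : Module ℂ (Renormed N) := inferInstanceAs (Module ℂ V)

instance [hN : Fact (IsComplexNorm N)] : NormedAddCommGroup (Renormed N) :=
  AddGroupNorm.toNormedAddCommGroup
    { toFun := N
      map_zero' := hN.out.map_zero
      add_le' := hN.out.add_le
      neg' := hN.out.map_neg
      eq_zero_of_map_eq_zero' := hN.out.eq_zero }

instance [hN : Fact (IsComplexNorm N)] : NormedSpace ℂ (Renormed N) where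
  norm_smul_le c x := (hN.out.smul_eq c x).le

end Norm

variable {V : Type*} [NormedAddCommGroup V] [NormedSpace ℂ V] [FiniteDimensional ℂ V]
  (N : V → ℝ) [Fact (IsComplexNorm N)]

instance : FiniteDimensional ℂ (Renormed N) := inferInstanceAs (FiniteDimensional ℂ V)

noncomputable def equiv : V ≃L[ℝ] Renormed N :=
  LinearEquiv.toContinuousLinearEquiv (E := V) (F := Renormed N) (LinearEquiv.refl ℝ V)

end Renormed

theorem opN_eq_norm {p q : ℕ} {N₁ : (Fin p → ℂ) → ℝ} {N₂ : (Fin q → ℂ) → ℝ}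
    [Fact (IsComplexNorm N₁)] [Fact (IsComplexNorm N₂)]
    (g : Renormed N₁ →L[ℝ] Renormed N₂) : opN N₁ N₂ g = ‖g‖ := by
  rw [← g.sSup_unitClosedBall_eq_norm]
  unfold opN
  congr 1
  ext r
  exact exists_congr fun v =>
    and_congr (mem_closedBall_zero_iff (E := Renormed N₁) (a := v)).symm eq_comm

/-- Quantitative implicit function theorem (Lemma C.2 of the paper):
the size `ε` of the ball on which the implicit function exists depends only on
`δ`, `C₁` and `C₂`.  Here `J` denotes the inverse of the partial derivative
`D₁T(0,0)`. -/
theorem quantitative_implicit_function_theorem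
    (δ C₁ C₂ : ℝ) (hδ : 0 < δ) (hC₁ : 0 < C₁) (hC₂ : 0 < C₂) :
    ∃ ε : ℝ, 0 < ε ∧
      ∀ (p q : ℕ), 1 ≤ p → 1 ≤ q →
      ∀ (NA : (Fin p → ℂ) → ℝ) (ND : (Fin q → ℂ) → ℝ),
      (∀ x y : Fin p → ℂ, NA (x + y) ≤ NA x + NA y) →
      (∀ (c : ℂ) (x : Fin p → ℂ), NA (c • x) = ‖c‖ * NA x) →
      (∀ x : Fin p → ℂ, NA x = 0 → x = 0) →
      (∀ x y : Fin q → ℂ, ND (x + y) ≤ ND x + ND y) →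
      (∀ (c : ℂ) (x : Fin q → ℂ), ND (c • x) = ‖c‖ * ND x) →
      (∀ x : Fin q → ℂ, ND x = 0 → x = 0) →
      ∀ T : (Fin p → ℂ) × (Fin q → ℂ) → (Fin p → ℂ),
      ContDiff ℝ 1 T → T (0, 0) = 0 →
      ∀ J : (Fin p → ℂ) →L[ℝ] (Fin p → ℂ),
      J.comp (pderiv1 T 0 0) = ContinuousLinearMap.id ℝ (Fin p → ℂ) →
      (pderiv1 T 0 0).comp J = ContinuousLinearMap.id ℝ (Fin p → ℂ) →
      (∀ (a : Fin p → ℂ) (d : Fin q → ℂ), NA a < δ → ND d < δ →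
        opN NA NA
          (⇑(ContinuousLinearMap.id ℝ (Fin p → ℂ) - J.comp (pderiv1 T a d))) ≤ 1 / 2) →
      opN NA NA (⇑J) ≤ C₁ →
      (∀ (a : Fin p → ℂ) (d : Fin q → ℂ), NA a < δ → ND d < δ →
        opN ND NA (⇑(pderiv2 T a d)) ≤ C₂) →
      ∃ f : (Fin q → ℂ) → (Fin p → ℂ),
        (∀ d : Fin q → ℂ, ND d < ε → NA (f d) < δ ∧ T (f d, d) = 0)
        ∧ (∀ g : (Fin q → ℂ) → (Fin p → ℂ),
            (∀ d : Fin q → ℂ, ND d < ε → NA (g d) < δ ∧ T (g d, d) = 0) →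
            ∀ d : Fin q → ℂ, ND d < ε → g d = f d)
        ∧ ContDiffOn ℝ 1 f {d : Fin q → ℂ | ND d < ε}
        ∧ (AnalyticOnNhd ℝ T Set.univ → AnalyticOnNhd ℝ f {d : Fin q → ℂ | ND d < ε}) := by
  set ε := min δ (δ / (4 * (C₁ * C₂)))
  have hεC : C₁ * C₂ * ε ≤ δ / 4 := calc
    C₁ * C₂ * ε ≤ C₁ * C₂ * (δ / (4 * (C₁ * C₂))) := by gcongr; exact min_le_right _ _
    _ = δ / 4 := by field_simp
  refine ⟨ε, lt_min hδ (by positivity), ?_⟩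
  intro p q _ _ NA ND hNA_add hNA_smul hNA_eq hND_add hND_smul hND_eq T hT hT₀ J hJ₁ hJ₂ h₁ hJ h₂
  have : Fact (IsComplexNorm NA) := ⟨⟨hNA_add, hNA_smul, hNA_eq⟩⟩
  have : Fact (IsComplexNorm ND) := ⟨⟨hND_add, hND_smul, hND_eq⟩⟩
  set eA := Renormed.equiv NA
  set eD := Renormed.equiv ND
  set T' := eA ∘ T ∘ (eA.prodCongr eD).symm
  have hpd₁ : ∀ a d, fderiv ℝ (fun x => T' (x, d)) a = eA ∘L pderiv1 T a d ∘L eA.symm :=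
    fun a d => eA.fderiv_conj eA (fun x => T (x, d)) a
  have hpd₂ : ∀ a d, fderiv ℝ (fun y => T' (a, y)) d = eA ∘L pderiv2 T a d ∘L eD.symm :=
    fun a d => eD.fderiv_conj eA (fun y => T (a, y)) d
  have hT' : ∀ {n : ℕ∞ω}, ContDiff ℝ n T → ContDiff ℝ n T' := fun hTn =>
    eA.contDiff.comp (hTn.comp (eA.prodCongr eD).symm.contDiff)
  obtain ⟨f, hf, huniq, hsmooth⟩ :=
    exists_implicitFunction_of_norm_bounds (T := T') (J := eA ∘L J ∘L eA.symm) hδ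
      (min_le_left _ _) hεC (hT' hT) hT₀
      (by rw [hpd₁]; ext v; exact congr($hJ₁ v)) (by rw [hpd₁]; ext v; exact congr($hJ₂ v))
      (fun a d ha hd => by rw [hpd₁, ← opN_eq_norm]; exact h₁ a d ha hd)
      (by rw [← opN_eq_norm]; exact hJ)
      (fun a d ha hd => by rw [hpd₂, ← opN_eq_norm]; exact h₂ a d ha hd)
  have hball : ∀ d, ND d < ε → eD d ∈ ball (0 : Renormed ND) ε :=
    fun _ hd => mem_ball_zero_iff.2 hd
  have hsmooth' : ∀ n : ℕ∞ω, n ≠ 0 → ContDiff ℝ n T →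
      ContDiffOn ℝ n (eA.symm ∘ f ∘ eD) {d | ND d < ε} := fun n hn hTn =>
    eA.symm.contDiff.comp_contDiffOn ((hsmooth n hn (hT' hTn)).comp eD.contDiff.contDiffOn hball)
  have hopen : IsOpen {d | ND d < ε} :=
    isOpen_lt (continuous_norm.comp eD.continuous) continuous_const
  refine ⟨eA.symm ∘ f ∘ eD,
    fun d hd => ⟨mem_ball_zero_iff.1 (hf _ (hball d hd)).1, (hf _ (hball d hd)).2⟩,
    fun g hg d hd => huniq _ (hball d hd) (g d) (mem_ball_zero_iff.2 (hg d hd).1) (hg d hd).2,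
    hsmooth' 1 one_ne_zero hT,
    fun hTa d hd => ((hsmooth' ω (by simp) hTa.contDiff).contDiffAt (hopen.mem_nhds hd)).analyticAt⟩
end

section
/- Let m ≥ 1 and let X₁, …, X_m be independent, identically distributed complex-valued random variables on a probability space with E X₁ = 0 and E|X₁|^a < ∞ for some real a with 1 < a ≤ 2. Then for every δ ∈ (0,1], P( |(1/m)·Σ_{i=1}^m X_i| ≤ (10·E|X₁|^a / (m^{a−1}·δ))^{1/a} ) ≥ 1 − δ. -/
/-!
Truncate every `Xᵢ` at norm `M = m t`, where `t` is the threshold in the statement. Outside an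
event of probability at most `m E|X₁|^a / M^a` (Markov) no `Xᵢ` is truncated. Since `E X₁ = 0`,
the truncated variables have mean of norm at most `M^(1-a) E|X₁|^a`, and since `a ≤ 2` their
second moment is at most `M^(2-a) E|X₁|^a`, so Chebyshev's inequality controls the deviation of
their sum from its mean. The choice `M^a = 10 m E|X₁|^a / δ` makes the two exceptional events
have probabilities `δ/10` and `10δ/81`.
-/

open MeasureTheory ProbabilityTheory

section Truncation

variable {E : Type*} [NormedAddCommGroup E]

noncomputable def truncateNorm (M : ℝ) (z : E) : E := if ‖z‖ ≤ M then z else 0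

variable {M a : ℝ}

lemma truncateNorm_of_norm_le {z : E} (h : ‖z‖ ≤ M) : truncateNorm M z = z := if_pos h

lemma norm_truncateNorm_le (hM : 0 ≤ M) (z : E) : ‖truncateNorm M z‖ ≤ M := by
  unfold truncateNorm
  split_ifs with h
  · exact h
  · simpa using hM

lemma norm_truncateNorm_sq_le (ha0 : 0 ≤ a) (ha2 : a ≤ 2) (hM : 0 ≤ M) (z : E) :
    ‖truncateNorm M z‖ ^ 2 ≤ M ^ (2 - a) * ‖z‖ ^ a := by
  unfold truncateNorm
  split_ifs with h
  · calc ‖z‖ ^ 2 = ‖z‖ ^ (2 - a) * ‖z‖ ^ a := by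
          rw [← Real.rpow_add_of_nonneg (norm_nonneg z) (by linarith) ha0, sub_add_cancel,
            Real.rpow_two]
      _ ≤ M ^ (2 - a) * ‖z‖ ^ a := by gcongr
  · rw [norm_zero, zero_pow two_ne_zero]
    positivity

lemma norm_sub_truncateNorm_le (ha : 1 ≤ a) (hM : 0 < M) (z : E) :
    ‖z - truncateNorm M z‖ ≤ M ^ (1 - a) * ‖z‖ ^ a := by
  unfold truncateNorm
  split_ifs with h
  · simp only [sub_self, norm_zero]
    positivity
  · have hz : 0 < ‖z‖ := hM.trans (not_le.1 h)
    calc ‖z - 0‖ = ‖z‖ ^ (1 - a) * ‖z‖ ^ a := by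
          rw [sub_zero, ← Real.rpow_add hz, sub_add_cancel, Real.rpow_one]
      _ ≤ M ^ (1 - a) * ‖z‖ ^ a := by
          gcongr ?_ * _
          exact Real.rpow_le_rpow_of_nonpos hM (not_le.1 h).le (by linarith)

lemma measurable_truncateNorm [MeasurableSpace E] [OpensMeasurableSpace E] :
    Measurable (truncateNorm (E := E) M) :=
  Measurable.ite (measurableSet_le measurable_norm measurable_const) measurable_id measurable_const

end Truncation

lemma ofReal_one_sub_le_of_measure_compl_le {Ω : Type*} [MeasurableSpace Ω] {μ : Measure Ω}
    [IsProbabilityMeasure μ] {s : Set Ω} {δ : ℝ} (hδ : 0 ≤ δ) (h : μ sᶜ ≤ ENNReal.ofReal δ) :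
    ENNReal.ofReal (1 - δ) ≤ μ s := by
  calc ENNReal.ofReal (1 - δ) ≤ 1 - ENNReal.ofReal δ := by
        rw [ENNReal.ofReal_sub 1 hδ, ENNReal.ofReal_one]
    _ ≤ 1 - μ sᶜ := tsub_le_tsub_left h 1
    _ ≤ μ s := by
        rw [tsub_le_iff_right, ← measure_univ (μ := μ), ← Set.union_compl_self s]
        exact measure_union_le s sᶜ

section Moments

variable {Ω : Type*} [MeasurableSpace Ω] {μ : Measure Ω}

lemma meas_ge_le_ofReal_integral_div [IsFiniteMeasure μ] {f : Ω → ℝ} (hf : 0 ≤ᵐ[μ] f)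
    (hfi : Integrable f μ) {ε : ℝ} (hε : 0 < ε) :
    μ {ω | ε ≤ f ω} ≤ ENNReal.ofReal ((∫ ω, f ω ∂μ) / ε) := by
  rw [ENNReal.le_ofReal_iff_toReal_le (measure_ne_top μ _)
    (div_nonneg (integral_nonneg_of_ae hf) hε.le), le_div_iff₀ hε, mul_comm]
  exact mul_meas_ge_le_integral_of_nonneg hf hfi ε

lemma MeasureTheory.MemLp.complex_re {Z : Ω → ℂ} {p : ENNReal} (hZ : MemLp Z p μ) :
    MemLp (fun ω ↦ (Z ω).re) p μ := hZ.re

lemma MeasureTheory.MemLp.complex_im {Z : Ω → ℂ} {p : ENNReal} (hZ : MemLp Z p μ) :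
    MemLp (fun ω ↦ (Z ω).im) p μ := hZ.im

noncomputable def complexVariance (Z : Ω → ℂ) (μ : Measure Ω) : ℝ :=
  Var[fun ω ↦ (Z ω).re; μ] + Var[fun ω ↦ (Z ω).im; μ]

lemma complexVariance_eq_integral [IsFiniteMeasure μ] {Z : Ω → ℂ} (hZ : MemLp Z 2 μ) :
    complexVariance Z μ = ∫ ω, ‖Z ω - μ[Z]‖ ^ 2 ∂μ := by
  have hZi : Integrable Z μ := hZ.integrable one_le_two
  have hre : (μ[Z]).re = ∫ ω, (Z ω).re ∂μ := (integral_re hZi).symm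
  have him : (μ[Z]).im = ∫ ω, (Z ω).im ∂μ := (integral_im hZi).symm
  rw [complexVariance, variance_eq_integral hZ.complex_re.1.aemeasurable,
    variance_eq_integral hZ.complex_im.1.aemeasurable, ← integral_add]
  · refine integral_congr_ae (ae_of_all μ fun ω ↦ ?_)
    simp only [Complex.sq_norm, Complex.normSq_apply, Complex.sub_re, Complex.sub_im, hre, him]
    ring
  · exact (hZ.complex_re.sub (memLp_const _)).integrable_sq
  · exact (hZ.complex_im.sub (memLp_const _)).integrable_sq

lemma meas_ge_le_complexVariance_div_sq [IsFiniteMeasure μ] {Z : Ω → ℂ} (hZ : MemLp Z 2 μ)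
    {c : ℝ} (hc : 0 < c) :
    μ {ω | c ≤ ‖Z ω - μ[Z]‖} ≤ ENNReal.ofReal (complexVariance Z μ / c ^ 2) := by
  rw [complexVariance_eq_integral hZ]
  calc μ {ω | c ≤ ‖Z ω - μ[Z]‖} ≤ μ {ω | c ^ 2 ≤ ‖Z ω - μ[Z]‖ ^ 2} :=
        measure_mono fun ω hω ↦ by
          simp only [Set.mem_ofPred_eq] at hω ⊢
          exact pow_le_pow_left₀ hc.le hω 2
    _ ≤ _ := meas_ge_le_ofReal_integral_div (ae_of_all μ fun ω ↦ by positivity)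
        ((hZ.sub (memLp_const _)).integrable_norm_pow two_ne_zero) (by positivity)

lemma complexVariance_le_integral_norm_sq [IsProbabilityMeasure μ] {Z : Ω → ℂ}
    (hZ : MemLp Z 2 μ) :
    complexVariance Z μ ≤ ∫ ω, ‖Z ω‖ ^ 2 ∂μ := by
  have hsplit : ∫ ω, ‖Z ω‖ ^ 2 ∂μ = (∫ ω, (Z ω).re ^ 2 ∂μ) + ∫ ω, (Z ω).im ^ 2 ∂μ := by
    rw [← integral_add hZ.complex_re.integrable_sq hZ.complex_im.integrable_sq]
    congr 1 with ω
    rw [Complex.sq_norm, Complex.normSq_apply]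
    ring
  rw [complexVariance, hsplit]
  exact add_le_add (variance_le_expectation_sq hZ.complex_re.1)
    (variance_le_expectation_sq hZ.complex_im.1)

lemma ProbabilityTheory.iIndepFun.complexVariance_sum {ι : Type*} [Fintype ι] {Z : ι → Ω → ℂ}
    (hZ : ∀ i, MemLp (Z i) 2 μ) (hindep : iIndepFun Z μ) :
    complexVariance (∑ i, Z i) μ = ∑ i, complexVariance (Z i) μ := by
  have hre : (fun ω ↦ ((∑ i, Z i) ω).re) = ∑ i, fun ω ↦ (Z i ω).re := by
    ext ω; simp [Complex.re_sum]
  have him : (fun ω ↦ ((∑ i, Z i) ω).im) = ∑ i, fun ω ↦ (Z i ω).im := by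
    ext ω; simp [Complex.im_sum]
  rw [complexVariance, hre, him,
    IndepFun.variance_sum (fun i _ ↦ (hZ i).complex_re)
      fun i _ j _ hij ↦ (hindep.comp _ fun _ ↦ Complex.measurable_re).indepFun hij,
    IndepFun.variance_sum (fun i _ ↦ (hZ i).complex_im)
      fun i _ j _ hij ↦ (hindep.comp _ fun _ ↦ Complex.measurable_im).indepFun hij,
    ← Finset.sum_add_distrib]
  rfl

end Moments

section TruncatedMoments

variable {Ω E : Type*} [MeasurableSpace Ω] {μ : Measure Ω} [NormedAddCommGroup E] {a M : ℝ}

lemma integrable_of_integrable_norm_rpow [IsFiniteMeasure μ] {Y : Ω → E}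
    (hY : AEStronglyMeasurable Y μ) (hint : Integrable (fun ω ↦ ‖Y ω‖ ^ a) μ) (ha : 1 ≤ a) :
    Integrable Y μ := by
  rw [← ENNReal.toReal_ofReal (zero_le_one.trans ha),
    integrable_norm_rpow_iff hY (by simp; linarith) ENNReal.ofReal_ne_top] at hint
  exact hint.integrable (by simpa using ha)

lemma measure_exists_lt_norm_le [IsFiniteMeasure μ] [MeasurableSpace E] [OpensMeasurableSpace E]
    {ι : Type*} [Fintype ι] {X : ι → Ω → E} {X₀ : Ω → E} (hident : ∀ i, IdentDistrib (X i) X₀ μ μ)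
    (hint : Integrable (fun ω ↦ ‖X₀ ω‖ ^ a) μ) (ha : 0 ≤ a) (hM : 0 < M) :
    μ {ω | ∃ i, M < ‖X i ω‖} ≤
      ENNReal.ofReal (Fintype.card ι * (∫ ω, ‖X₀ ω‖ ^ a ∂μ) / M ^ a) := by
  have hone : ∀ i, μ {ω | M < ‖X i ω‖} ≤ ENNReal.ofReal ((∫ ω, ‖X₀ ω‖ ^ a ∂μ) / M ^ a) := by
    intro i
    rw [show μ {ω | M < ‖X i ω‖} = μ {ω | M < ‖X₀ ω‖} from
      (hident i).measure_mem_eq (measurableSet_lt measurable_const measurable_norm)]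
    refine (measure_mono fun ω (hω : M < ‖X₀ ω‖) ↦ ?_).trans
      (meas_ge_le_ofReal_integral_div (ae_of_all _ fun ω ↦ by positivity) hint (by positivity))
    exact Real.rpow_le_rpow hM.le hω.le ha
  calc μ {ω | ∃ i, M < ‖X i ω‖} ≤ ∑ i, μ {ω | M < ‖X i ω‖} := by
        rw [Set.ofPred_exists]; exact measure_iUnion_fintype_le _ _
    _ ≤ ∑ _i : ι, ENNReal.ofReal ((∫ ω, ‖X₀ ω‖ ^ a ∂μ) / M ^ a) :=
        Finset.sum_le_sum fun i _ ↦ hone i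
    _ = _ := by
        rw [Finset.sum_const, Finset.card_univ, nsmul_eq_mul, ← ENNReal.ofReal_natCast,
          ← ENNReal.ofReal_mul (by positivity), mul_div_assoc]

lemma norm_integral_truncateNorm_le [NormedSpace ℝ E] [MeasurableSpace E] [BorelSpace E]
    [SecondCountableTopology E] [IsFiniteMeasure μ] {Y : Ω → E}
    (hY : AEMeasurable Y μ) (hint : Integrable (fun ω ↦ ‖Y ω‖ ^ a) μ) (hmean : μ[Y] = 0)
    (ha : 1 ≤ a) (hM : 0 < M) :
    ‖∫ ω, truncateNorm M (Y ω) ∂μ‖ ≤ M ^ (1 - a) * ∫ ω, ‖Y ω‖ ^ a ∂μ := by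
  have hYi := integrable_of_integrable_norm_rpow hY.aestronglyMeasurable hint ha
  have hTi : Integrable (fun ω ↦ truncateNorm M (Y ω)) μ :=
    .of_bound (measurable_truncateNorm.comp_aemeasurable hY).aestronglyMeasurable M
      (ae_of_all _ fun ω ↦ norm_truncateNorm_le hM.le _)
  calc ‖∫ ω, truncateNorm M (Y ω) ∂μ‖ = ‖∫ ω, (Y ω - truncateNorm M (Y ω)) ∂μ‖ := by
        rw [integral_sub hYi hTi, hmean, zero_sub, norm_neg]
    _ ≤ ∫ ω, ‖Y ω - truncateNorm M (Y ω)‖ ∂μ := norm_integral_le_integral_norm _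
    _ ≤ ∫ ω, M ^ (1 - a) * ‖Y ω‖ ^ a ∂μ :=
        integral_mono (hYi.sub hTi).norm (hint.const_mul _)
          fun ω ↦ norm_sub_truncateNorm_le ha hM _
    _ = M ^ (1 - a) * ∫ ω, ‖Y ω‖ ^ a ∂μ := integral_const_mul _ _

lemma integral_norm_truncateNorm_sq_le [MeasurableSpace E] [OpensMeasurableSpace E]
    [IsFiniteMeasure μ] {Y : Ω → E} (hY : AEMeasurable Y μ)
    (hint : Integrable (fun ω ↦ ‖Y ω‖ ^ a) μ) (ha0 : 0 ≤ a) (ha2 : a ≤ 2) (hM : 0 ≤ M) :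
    ∫ ω, ‖truncateNorm M (Y ω)‖ ^ 2 ∂μ ≤ M ^ (2 - a) * ∫ ω, ‖Y ω‖ ^ a ∂μ := by
  rw [← integral_const_mul]
  refine integral_mono (.of_bound ?_ (M ^ 2) (ae_of_all _ fun ω ↦ ?_)) (hint.const_mul _)
    fun ω ↦ norm_truncateNorm_sq_le ha0 ha2 hM _
  · exact ((measurable_truncateNorm.comp_aemeasurable hY).norm.pow_const 2).aestronglyMeasurable
  · rw [Real.norm_of_nonneg (by positivity)]
    exact pow_le_pow_left₀ (norm_nonneg _) (norm_truncateNorm_le hM _) 2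

end TruncatedMoments

lemma exists_lt_norm_or_le_norm_sum_truncateNorm_sub {E ι : Type*} [NormedAddCommGroup E]
    [Fintype ι] {x : ι → E} {y : E} {c M : ℝ} (hyc : ‖y‖ + c ≤ M) (hx : M < ‖∑ i, x i‖) :
    (∃ i, M < ‖x i‖) ∨ c ≤ ‖∑ i, truncateNorm M (x i) - y‖ := by
  by_contra! h
  obtain ⟨hsmall, hdev⟩ := h
  have hsum : ∑ i, truncateNorm M (x i) = ∑ i, x i :=
    Finset.sum_congr rfl fun i _ ↦ truncateNorm_of_norm_le (hsmall i)
  have := norm_le_norm_sub_add (∑ i, x i) y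
  rw [hsum] at hdev
  linarith

section IID

variable {Ω ι : Type*} [MeasurableSpace Ω] {μ : Measure Ω} [Fintype ι] {X : ι → Ω → ℂ}
  {X₀ : Ω → ℂ} {a M c : ℝ}

lemma ae_forall_eq_zero_of_integral_norm_rpow_eq_zero (hident : ∀ i, IdentDistrib (X i) X₀ μ μ)
    (hint : Integrable (fun ω ↦ ‖X₀ ω‖ ^ a) μ) (ha : 0 < a) (h0 : ∫ ω, ‖X₀ ω‖ ^ a ∂μ = 0) :
    ∀ᵐ ω ∂μ, ∀ i, X i ω = 0 := by
  have hX₀ : ∀ᵐ ω ∂μ, X₀ ω = 0 := by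
    filter_upwards [(integral_eq_zero_iff_of_nonneg (fun ω ↦ by positivity) hint).1 h0] with ω hω
    simpa [Real.rpow_eq_zero (norm_nonneg _) ha.ne'] using hω
  exact ae_all_iff.2 fun i ↦ (hident i).symm.ae_snd (measurableSet_singleton 0) hX₀

variable [IsProbabilityMeasure μ]

lemma meas_ge_norm_sum_truncateNorm_sub_integral_le (hindep : iIndepFun X μ)
    (hident : ∀ i, IdentDistrib (X i) X₀ μ μ)
    (hint : Integrable (fun ω ↦ ‖X₀ ω‖ ^ a) μ) (ha0 : 0 ≤ a) (ha2 : a ≤ 2) (hM : 0 ≤ M)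
    (hc : 0 < c) :
    μ {ω | c ≤ ‖∑ i, truncateNorm M (X i ω) - ∫ ω', ∑ i, truncateNorm M (X i ω') ∂μ‖} ≤
      ENNReal.ofReal (Fintype.card ι * (M ^ (2 - a) * ∫ ω, ‖X₀ ω‖ ^ a ∂μ) / c ^ 2) := by
  set Y : ι → Ω → ℂ := fun i ω ↦ truncateNorm M (X i ω)
  have hY : ∀ i, MemLp (Y i) 2 μ := fun i ↦ .of_bound
    (measurable_truncateNorm.comp_aemeasurable (hident i).aemeasurable_fst).aestronglyMeasurable
    M (ae_of_all _ fun ω ↦ norm_truncateNorm_le hM _)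
  have hvar : complexVariance (∑ i, Y i) μ ≤
      Fintype.card ι * (M ^ (2 - a) * ∫ ω, ‖X₀ ω‖ ^ a ∂μ) := by
    rw [(hindep.comp _ fun _ ↦ measurable_truncateNorm).complexVariance_sum hY]
    calc ∑ i, complexVariance (Y i) μ ≤ ∑ _i : ι, M ^ (2 - a) * ∫ ω, ‖X₀ ω‖ ^ a ∂μ := by
          refine Finset.sum_le_sum fun i _ ↦ (complexVariance_le_integral_norm_sq (hY i)).trans ?_
          exact ((hident i).comp ((measurable_truncateNorm (M := M)).norm.pow_const 2)).integral_eq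
            |>.trans_le <|
              integral_norm_truncateNorm_sq_le (hident i).aemeasurable_snd hint ha0 ha2 hM
      _ = _ := by rw [Finset.sum_const, Finset.card_univ, nsmul_eq_mul]
  calc _ = μ {ω | c ≤ ‖(∑ i, Y i) ω - μ[∑ i, Y i]‖} := by simp only [Finset.sum_apply, Y]
    _ ≤ ENNReal.ofReal (complexVariance (∑ i, Y i) μ / c ^ 2) :=
        meas_ge_le_complexVariance_div_sq (memLp_finsetSum' _ fun i _ ↦ hY i) hc
    _ ≤ _ := by gcongr

lemma norm_integral_sum_truncateNorm_le (hident : ∀ i, IdentDistrib (X i) X₀ μ μ)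
    (hint : Integrable (fun ω ↦ ‖X₀ ω‖ ^ a) μ) (hmean : μ[X₀] = 0) (ha1 : 1 ≤ a) (hM : 0 < M) :
    ‖∫ ω, ∑ i, truncateNorm M (X i ω) ∂μ‖ ≤
      Fintype.card ι * (M ^ (1 - a) * ∫ ω, ‖X₀ ω‖ ^ a ∂μ) := by
  have hT : ∀ i, Integrable (fun ω ↦ truncateNorm M (X i ω)) μ := fun i ↦ .of_bound
    (measurable_truncateNorm.comp_aemeasurable (hident i).aemeasurable_fst).aestronglyMeasurable
    M (ae_of_all _ fun ω ↦ norm_truncateNorm_le hM.le _)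
  rw [integral_finsetSum _ fun i _ ↦ hT i]
  calc ‖∑ i, ∫ ω, truncateNorm M (X i ω) ∂μ‖ ≤ ∑ i, ‖∫ ω, truncateNorm M (X i ω) ∂μ‖ :=
        norm_sum_le _ _
    _ ≤ ∑ _i : ι, M ^ (1 - a) * ∫ ω, ‖X₀ ω‖ ^ a ∂μ := by
        refine Finset.sum_le_sum fun i _ ↦ ?_
        have hlaw := ((hident i).comp (measurable_truncateNorm (M := M))).integral_eq
        exact (congrArg norm hlaw).trans_le
          (norm_integral_truncateNorm_le (hident i).aemeasurable_snd hint hmean ha1 hM)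
    _ = _ := by rw [Finset.sum_const, Finset.card_univ, nsmul_eq_mul]

theorem measure_lt_norm_sum_le (hindep : iIndepFun X μ)
    (hident : ∀ i, IdentDistrib (X i) X₀ μ μ)
    (hint : Integrable (fun ω ↦ ‖X₀ ω‖ ^ a) μ) (hmean : μ[X₀] = 0) (ha1 : 1 ≤ a) (ha2 : a ≤ 2)
    (hM : 0 < M) (hc : 0 < c)
    (hMc : Fintype.card ι * (M ^ (1 - a) * ∫ ω, ‖X₀ ω‖ ^ a ∂μ) + c ≤ M) :
    μ {ω | M < ‖∑ i, X i ω‖} ≤ ENNReal.ofReal (Fintype.card ι * (∫ ω, ‖X₀ ω‖ ^ a ∂μ) / M ^ a +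
      Fintype.card ι * (M ^ (2 - a) * ∫ ω, ‖X₀ ω‖ ^ a ∂μ) / c ^ 2) := by
  calc μ {ω | M < ‖∑ i, X i ω‖} ≤ μ ({ω | ∃ i, M < ‖X i ω‖} ∪
        {ω | c ≤ ‖∑ i, truncateNorm M (X i ω) - ∫ ω', ∑ i, truncateNorm M (X i ω') ∂μ‖}) :=
        measure_mono fun ω hω ↦ exists_lt_norm_or_le_norm_sum_truncateNorm_sub
          (by linarith [norm_integral_sum_truncateNorm_le hident hint hmean ha1 hM]) hω
    _ ≤ _ := measure_union_le _ _
    _ ≤ _ := add_le_add (measure_exists_lt_norm_le hident hint (by linarith) hM)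
        (meas_ge_norm_sum_truncateNorm_sub_integral_le hindep hident hint (by linarith) ha2
          hM.le hc)
    _ = _ := (ENNReal.ofReal_add (by positivity) (by positivity)).symm

theorem measure_lt_norm_sum_le_of_rpow_eq (hindep : iIndepFun X μ)
    (hident : ∀ i, IdentDistrib (X i) X₀ μ μ) (hint : Integrable (fun ω ↦ ‖X₀ ω‖ ^ a) μ)
    (hmean : μ[X₀] = 0) (ha1 : 1 ≤ a) (ha2 : a ≤ 2) {δ : ℝ} (hδ0 : 0 < δ) (hδ1 : δ ≤ 1)
    (hM : 0 < M) (hMa : M ^ a = 10 * Fintype.card ι * (∫ ω, ‖X₀ ω‖ ^ a ∂μ) / δ) :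
    μ {ω | M < ‖∑ i, X i ω‖} ≤ ENNReal.ofReal δ := by
  set A := ∫ ω, ‖X₀ ω‖ ^ a ∂μ
  obtain ⟨hι, hA⟩ : (Fintype.card ι : ℝ) ≠ 0 ∧ A ≠ 0 := by
    rw [← mul_ne_zero_iff]
    intro h
    rw [mul_assoc, h, mul_zero, zero_div] at hMa
    exact (Real.rpow_pos_of_pos hM a).ne' hMa
  have h1 : Fintype.card ι * (M ^ (1 - a) * A) = M * (δ / 10) := by
    rw [Real.rpow_sub hM, Real.rpow_one, hMa]; field_simp
  have h2 : Fintype.card ι * (M ^ (2 - a) * A) = M ^ 2 * (δ / 10) := by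
    rw [Real.rpow_sub hM, Real.rpow_two, hMa]; field_simp
  have h3 : Fintype.card ι * A / M ^ a = δ / 10 := by
    rw [hMa]; field_simp
  refine (measure_lt_norm_sum_le (c := 9 / 10 * M) hindep hident hint hmean ha1 ha2 hM
    (by positivity) (by rw [h1]; nlinarith)).trans (ENNReal.ofReal_le_ofReal ?_)
  rw [h2, h3]
  field_simp
  nlinarith

end IID

theorem quantitative_law_of_large_numbers_general
    (Ω : Type*) [MeasurableSpace Ω] (μ : Measure Ω) [IsProbabilityMeasure μ]
    (m : ℕ) (hm : 0 < m) (a : ℝ) (ha1 : 1 < a) (ha2 : a ≤ 2)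
    (X : Fin m → Ω → ℂ)
    (hindep : iIndepFun X μ)
    (hident : ∀ i, IdentDistrib (X i) (X ⟨0, hm⟩) μ μ)
    (hint : Integrable (fun ω => ‖X ⟨0, hm⟩ ω‖ ^ a) μ)
    (hmean : ∫ ω, X ⟨0, hm⟩ ω ∂μ = 0) :
    ∀ δ : ℝ, δ ∈ Set.Ioc (0 : ℝ) 1 →
      ENNReal.ofReal (1 - δ) ≤
        μ {ω | ‖(m : ℂ)⁻¹ * ∑ i, X i ω‖ ≤
          (10 * (∫ ω, ‖X ⟨0, hm⟩ ω‖ ^ a ∂μ) / ((m : ℝ) ^ (a - 1) * δ)) ^ (1 / a)} := by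
  rintro δ ⟨hδ0, hδ1⟩
  set A := ∫ ω, ‖X ⟨0, hm⟩ ω‖ ^ a ∂μ
  set t := (10 * A / ((m : ℝ) ^ (a - 1) * δ)) ^ (1 / a)
  refine ofReal_one_sub_le_of_measure_compl_le hδ0.le ?_
  rcases (show 0 ≤ A by positivity).eq_or_lt with hA | hA
  · -- Then `t = 0`, so truncating at `m t` is useless; instead all `Xᵢ` vanish almost surely.
    refine (measure_eq_zero_iff_ae_notMem.2 ?_).trans_le zero_le
    filter_upwards
      [ae_forall_eq_zero_of_integral_norm_rpow_eq_zero hident hint (by linarith) hA.symm] with ω hω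
    simp [hω, t]
    positivity
  have hm0 : (0 : ℝ) < m := Nat.cast_pos.2 hm
  have ht : t ^ a = 10 * A / ((m : ℝ) ^ (a - 1) * δ) := by
    simp only [t, one_div]
    exact Real.rpow_inv_rpow (by positivity) (by linarith)
  have hset : {ω | ‖(m : ℂ)⁻¹ * ∑ i, X i ω‖ ≤ t}ᶜ = {ω | m * t < ‖∑ i, X i ω‖} := by
    ext ω
    simp [lt_inv_mul_iff₀ hm0]
  rw [hset]
  refine measure_lt_norm_sum_le_of_rpow_eq hindep hident hint hmean ha1.le ha2 hδ0 hδ1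
    (by positivity) ?_
  change (m * t) ^ a = 10 * Fintype.card (Fin m) * A / δ
  rw [Real.mul_rpow hm0.le (by positivity), ht, Real.rpow_sub_one hm0.ne', Fintype.card_fin]
  field_simp

/-- Quantitative law of large numbers (Proposition B.1 of the paper): for centred
i.i.d. complex random variables `X₁, …, X_m` with finite `a`-th moment, `1 < a ≤ 2`,
the average `(1/m)·Σ Xᵢ` is bounded by `(10·E|X₁|^a/(m^{a−1}·δ))^{1/a}` with
probability at least `1 − δ`. -/
theorem quantitative_law_of_large_numbers
    (Ω : Type*) [MeasurableSpace Ω] (μ : Measure Ω) [IsProbabilityMeasure μ]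
    (m : ℕ) (hm : 0 < m) (a : ℝ) (ha1 : 1 < a) (ha2 : a ≤ 2)
    (X : Fin m → Ω → ℂ)
    (hmeas : ∀ i, Measurable (X i))
    (hindep : iIndepFun X μ)
    (hident : ∀ i, IdentDistrib (X i) (X ⟨0, hm⟩) μ μ)
    (hint : Integrable (fun ω => ‖X ⟨0, hm⟩ ω‖ ^ a) μ)
    (hmean : ∫ ω, X ⟨0, hm⟩ ω ∂μ = 0) :
    ∀ δ : ℝ, δ ∈ Set.Ioc (0 : ℝ) 1 →
      ENNReal.ofReal (1 - δ) ≤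
        μ {ω | ‖(m : ℂ)⁻¹ * ∑ i, X i ω‖ ≤
          (10 * (∫ ω, ‖X ⟨0, hm⟩ ω‖ ^ a ∂μ) / ((m : ℝ) ^ (a - 1) * δ)) ^ (1 / a)} :=
  quantitative_law_of_large_numbers_general Ω μ m hm a ha1 ha2 X hindep hident hint hmean
end

section
/- Let N ≥ 1, let H ∈ Matrix N N ℂ be Hermitian with det H ≠ 0, and let T > 0. Then for every η > 0 the matrix H − i·η·1 is invertible, and log|det H| = − ∫₀^T Im( tr( (H − i·η·1)⁻¹ ) ) dη + log|det( H − i·T·1 )|. -/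
/-!
Diagonalise `H = U diag(λ) U*`. Then `det (H - it) = ∏ (λⱼ - it)` and
`tr (H - it)⁻¹ = ∑ (λⱼ - it)⁻¹`, so everything reduces to a single real eigenvalue
`λ ≠ 0`: the function `t ↦ log |λ - it| = log (λ² + t²) / 2` has derivative
`t / (λ² + t²) = Im (λ - it)⁻¹`, which is continuous because `λ ≠ 0`, and the fundamental
theorem of calculus on `[0, T]` gives the identity eigenvalue by eigenvalue.
-/

open Complex

namespace Matrix

variable {n R : Type*} [Fintype n] [DecidableEq n] [CommRing R] [StarRing R]
  {U : Matrix n n R}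

theorem det_unitary_conj (hU : U ∈ unitary (Matrix n n R)) (A : Matrix n n R) :
    (U * A * star U).det = A.det := by
  rw [det_mul, det_mul, mul_right_comm, ← det_mul, Unitary.mul_star_self_of_mem hU, det_one,
    one_mul]

theorem trace_unitary_conj (hU : U ∈ unitary (Matrix n n R)) (A : Matrix n n R) :
    (U * A * star U).trace = A.trace := by
  rw [trace_mul_cycle, Unitary.star_mul_self_of_mem hU, one_mul]

theorem inv_unitary_conj (hU : U ∈ unitary (Matrix n n R)) (A : Matrix n n R) :
    (U * A * star U)⁻¹ = U * A⁻¹ * star U := by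
  rw [mul_inv_rev, mul_inv_rev, inv_eq_left_inv (Unitary.mul_star_self_of_mem hU),
    inv_eq_left_inv (Unitary.star_mul_self_of_mem hU), mul_assoc]

end Matrix

namespace Matrix.IsHermitian

variable {𝕜 n : Type*} [RCLike 𝕜] [Fintype n] [DecidableEq n] {H : Matrix n n 𝕜}

theorem sub_smul_one_eq_conj_diagonal (hH : H.IsHermitian) (z : 𝕜) :
    H - z • 1 = (hH.eigenvectorUnitary : Matrix n n 𝕜) *
      diagonal (fun i => (hH.eigenvalues i : 𝕜) - z) *
        star (hH.eigenvectorUnitary : Matrix n n 𝕜) := by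
  have hz : z • (1 : Matrix n n 𝕜) =
      Unitary.conjStarAlgAut 𝕜 _ hH.eigenvectorUnitary (z • 1) := by
    rw [map_smul, map_one]
  conv_lhs =>
    rw [hH.spectral_theorem, hz, ← map_sub, ← diagonal_one, ← diagonal_smul, diagonal_sub]
  simp

theorem det_sub_smul_one (hH : H.IsHermitian) (z : 𝕜) :
    (H - z • 1).det = ∏ i, ((hH.eigenvalues i : 𝕜) - z) := by
  rw [hH.sub_smul_one_eq_conj_diagonal, det_unitary_conj hH.eigenvectorUnitary.2, det_diagonal]

theorem trace_inv_sub_smul_one (hH : H.IsHermitian) {z : 𝕜}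
    (hz : ∀ i, (hH.eigenvalues i : 𝕜) ≠ z) :
    (H - z • 1)⁻¹.trace = ∑ i, ((hH.eigenvalues i : 𝕜) - z)⁻¹ := by
  have hinv : (diagonal fun i => (hH.eigenvalues i : 𝕜) - z)⁻¹
      = diagonal fun i => ((hH.eigenvalues i : 𝕜) - z)⁻¹ := by
    refine inv_eq_left_inv ?_
    rw [diagonal_mul_diagonal, ← diagonal_one]
    exact congrArg diagonal (funext fun i => inv_mul_cancel₀ (sub_ne_zero.mpr (hz i)))
  rw [hH.sub_smul_one_eq_conj_diagonal, inv_unitary_conj hH.eigenvectorUnitary.2,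
    trace_unitary_conj hH.eigenvectorUnitary.2, hinv, trace_diagonal]

theorem eigenvalues_ne_zero (hH : H.IsHermitian) (hdet : H.det ≠ 0) (i : n) :
    hH.eigenvalues i ≠ 0 := by
  rw [hH.det_eq_prod_eigenvalues] at hdet
  exact_mod_cast Finset.prod_ne_zero_iff.mp hdet i (Finset.mem_univ i)

end Matrix.IsHermitian

theorem Complex.ofReal_ne_mul_I {a t : ℝ} (ht : t ≠ 0) : (a : ℂ) ≠ t * I := fun h =>
  ht (by simpa [eq_comm] using congrArg Complex.im h)

theorem Complex.im_inv_ofReal_sub_mul_I (a t : ℝ) :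
    ((a : ℂ) - t * I)⁻¹.im = t / (a ^ 2 + t ^ 2) := by
  simp [Complex.inv_im, Complex.normSq_apply, sq]

theorem Complex.log_norm_ofReal_sub_mul_I (a t : ℝ) :
    Real.log ‖(a : ℂ) - t * I‖ = Real.log (a ^ 2 + t ^ 2) / 2 := by
  rw [Complex.norm_def, Real.log_sqrt (Complex.normSq_nonneg _)]
  simp [Complex.normSq_apply, sq]

theorem continuous_div_sq_add_sq {a : ℝ} (ha : a ≠ 0) :
    Continuous fun t : ℝ => t / (a ^ 2 + t ^ 2) :=
  continuous_id.div (by fun_prop) fun t => by positivity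

theorem integral_Ioo_div_sq_add_sq {a T : ℝ} (ha : a ≠ 0) (hT : 0 ≤ T) :
    ∫ t in Set.Ioo 0 T, t / (a ^ 2 + t ^ 2)
      = Real.log (a ^ 2 + T ^ 2) / 2 - Real.log (a ^ 2 + 0 ^ 2) / 2 := by
  have hderiv (t : ℝ) :
      HasDerivAt (fun s => Real.log (a ^ 2 + s ^ 2) / 2) (t / (a ^ 2 + t ^ 2)) t := by
    have hlog := ((hasDerivAt_pow 2 t).const_add (a ^ 2)).log (by positivity)
    refine (hlog.div_const 2).congr_deriv ?_
    push_cast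
    ring
  rw [← MeasureTheory.integral_Ioc_eq_integral_Ioo, ← intervalIntegral.integral_of_le hT,
    intervalIntegral.integral_eq_sub_of_hasDerivAt (fun t _ => hderiv t)
      ((continuous_div_sq_add_sq ha).intervalIntegrable 0 T)]

namespace Matrix.IsHermitian

variable {n : Type*} [Fintype n] [DecidableEq n] {H : Matrix n n ℂ}

theorem det_sub_mul_I_smul_one_ne_zero (hH : H.IsHermitian) {t : ℝ} (ht : t ≠ 0) :
    (H - ((t : ℂ) * I) • 1).det ≠ 0 := by
  rw [hH.det_sub_smul_one]
  exact Finset.prod_ne_zero_iff.mpr fun i _ => sub_ne_zero.mpr (ofReal_ne_mul_I ht)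

theorem isUnit_sub_mul_I_smul_one (hH : H.IsHermitian) {t : ℝ} (ht : t ≠ 0) :
    IsUnit (H - ((t : ℂ) * I) • 1) :=
  (isUnit_iff_isUnit_det _).mpr (hH.det_sub_mul_I_smul_one_ne_zero ht).isUnit

theorem log_norm_det_sub_mul_I_smul_one (hH : H.IsHermitian) {t : ℝ}
    (hdet : (H - ((t : ℂ) * I) • 1).det ≠ 0) :
    Real.log ‖(H - ((t : ℂ) * I) • 1).det‖
      = ∑ i, Real.log (hH.eigenvalues i ^ 2 + t ^ 2) / 2 := by
  rw [hH.det_sub_smul_one] at hdet ⊢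
  rw [norm_prod,
    Real.log_prod fun i hi => norm_ne_zero_iff.mpr (Finset.prod_ne_zero_iff.mp hdet i hi)]
  simp only [RCLike.ofReal_eq_complex_ofReal, log_norm_ofReal_sub_mul_I]

theorem im_trace_inv_sub_mul_I_smul_one (hH : H.IsHermitian) {t : ℝ} (ht : t ≠ 0) :
    (H - ((t : ℂ) * I) • 1)⁻¹.trace.im = ∑ i, t / (hH.eigenvalues i ^ 2 + t ^ 2) := by
  rw [hH.trace_inv_sub_smul_one fun i => ofReal_ne_mul_I ht, im_sum]
  simp only [RCLike.ofReal_eq_complex_ofReal, im_inv_ofReal_sub_mul_I]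

theorem integral_im_trace_inv_sub_mul_I_smul_one (hH : H.IsHermitian) (hdet : H.det ≠ 0)
    {T : ℝ} (hT : 0 ≤ T) :
    ∫ t in Set.Ioo 0 T, (H - ((t : ℂ) * I) • 1)⁻¹.trace.im
      = ∑ i, (Real.log (hH.eigenvalues i ^ 2 + T ^ 2) / 2
        - Real.log (hH.eigenvalues i ^ 2 + 0 ^ 2) / 2) := by
  have hcont (i : n) := continuous_div_sq_add_sq (hH.eigenvalues_ne_zero hdet i)
  rw [MeasureTheory.setIntegral_congr_fun measurableSet_Ioo
      fun t ht => hH.im_trace_inv_sub_mul_I_smul_one ht.1.ne',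
    MeasureTheory.integral_finsetSum _ fun i _ =>
      (hcont i).integrableOn_Icc.mono_set Set.Ioo_subset_Icc_self]
  exact Finset.sum_congr rfl fun i _ =>
    integral_Ioo_div_sq_add_sq (hH.eigenvalues_ne_zero hdet i) hT

end Matrix.IsHermitian

theorem log_det_via_resolvent_general
    (N : ℕ)
    (H : Matrix (Fin N) (Fin N) ℂ) (hH : H.IsHermitian) (hdet : H.det ≠ 0)
    (T : ℝ) (hT : 0 < T) :
    (∀ η : ℝ, 0 < η →
      IsUnit (H - ((η : ℂ) * Complex.I) • (1 : Matrix (Fin N) (Fin N) ℂ)))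
    ∧ Real.log ‖H.det‖
      = -(∫ η in Set.Ioo (0 : ℝ) T,
            (Matrix.trace
              ((H - ((η : ℂ) * Complex.I) • (1 : Matrix (Fin N) (Fin N) ℂ))⁻¹)).im)
        + Real.log ‖
            ((H - ((T : ℂ) * Complex.I) • (1 : Matrix (Fin N) (Fin N) ℂ)).det)‖ := by
  refine ⟨fun η hη => hH.isUnit_sub_mul_I_smul_one hη.ne', ?_⟩
  have hH0 : H - (((0 : ℝ) : ℂ) * I) • 1 = H := by simp
  have hlogH := hH.log_norm_det_sub_mul_I_smul_one (t := 0) (hH0.symm ▸ hdet)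
  rw [hH0] at hlogH
  rw [hlogH, hH.log_norm_det_sub_mul_I_smul_one (hH.det_sub_mul_I_smul_one_ne_zero hT.ne'),
    hH.integral_im_trace_inv_sub_mul_I_smul_one hdet hT.le, Finset.sum_sub_distrib]
  ring

/-- Identity (3.4) of the paper: for a Hermitian matrix `H` with `det H ≠ 0` and any
`T > 0`, the resolvent `(H − iη·1)⁻¹` exists for all `η > 0` and
`log|det H| = −∫₀^T Im tr (H − iη·1)⁻¹ dη + log|det (H − iT·1)|`. -/
theorem log_det_via_resolvent
    (N : ℕ) (hN : 1 ≤ N)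
    (H : Matrix (Fin N) (Fin N) ℂ) (hH : H.IsHermitian) (hdet : H.det ≠ 0)
    (T : ℝ) (hT : 0 < T) :
    (∀ η : ℝ, 0 < η →
      IsUnit (H - ((η : ℂ) * Complex.I) • (1 : Matrix (Fin N) (Fin N) ℂ)))
    ∧ Real.log ‖H.det‖
      = -(∫ η in Set.Ioo (0 : ℝ) T,
            (Matrix.trace
              ((H - ((η : ℂ) * Complex.I) • (1 : Matrix (Fin N) (Fin N) ℂ))⁻¹)).im)
        + Real.log ‖
            ((H - ((T : ℂ) * Complex.I) • (1 : Matrix (Fin N) (Fin N) ℂ)).det)‖ :=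
  log_det_via_resolvent_general N H hH hdet T hT
end

section
/- Let N ≥ 1, let H ∈ Matrix N N ℂ be Hermitian, let u ∈ ℂ^N with u ≠ 0 and H·u = 0, and let η > 0. Then H − i·η·1 is invertible and for every v ∈ ℂ^N, Im( ⟪v, (H − i·η·1)⁻¹·v⟫ ) ≥ |⟪v, u⟫|² / (η·‖u‖²). -/
open Matrix

/-!
Write `v = (H - iη) w`. Since `H` is Hermitian, `Im ⟪v, w⟫ = η ‖w‖²`, and since `H u = 0`,
`⟪v, u⟫ = iη ⟪w, u⟫`. Cauchy–Schwarz then gives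
`|⟪v, u⟫|² ≤ η² ‖w‖² ‖u‖² = η ‖u‖² · Im ⟪v, w⟫`.
The first identity also shows that `H - iη` is injective, hence invertible.
-/

open scoped InnerProductSpace ComplexConjugate
open WithLp (toLp)

namespace LinearMap.IsSymmetric

variable {E : Type*} [NormedAddCommGroup E] [InnerProductSpace ℂ E] {T : E →ₗ[ℂ] E}

lemma im_inner_sub_smul_apply_self (hT : T.IsSymmetric) (z : ℂ) (w : E) :
    (⟪T w - z • w, w⟫_ℂ).im = z.im * ‖w‖ ^ 2 := by
  have hTw : (⟪T w, w⟫_ℂ).im = 0 := by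
    rw [hT]
    exact hT.im_inner_self_apply w
  rw [inner_sub_left, inner_smul_left, inner_self_eq_norm_sq_to_K]
  simp [Complex.mul_im, hTw, ← Complex.ofReal_pow]

lemma inner_sub_smul_apply_of_apply_eq_zero (hT : T.IsSymmetric) {u : E} (hu : T u = 0)
    (z : ℂ) (w : E) : ⟪T w - z • w, u⟫_ℂ = -(conj z * ⟪w, u⟫_ℂ) := by
  rw [inner_sub_left, hT, hu, inner_zero_right, inner_smul_left, zero_sub]

lemma injective_sub_smul (hT : T.IsSymmetric) {z : ℂ} (hz : z.im ≠ 0) :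
    Function.Injective fun w ↦ T w - z • w := by
  intro a b (hab : T a - z • a = T b - z • b)
  have hzero : T (a - b) - z • (a - b) = 0 := by
    rw [map_sub, smul_sub, sub_sub_sub_comm, hab, sub_self]
  have him := hT.im_inner_sub_smul_apply_self z (a - b)
  rw [hzero, inner_zero_left, Complex.zero_im, eq_comm] at him
  simpa [hz, sub_eq_zero] using him

lemma norm_inner_sq_div_le_im_inner (hT : T.IsSymmetric) {u : E} (hu : T u = 0)
    {η : ℝ} (hη : 0 ≤ η) (w : E) :
    ‖⟪T w - (η * Complex.I) • w, u⟫_ℂ‖ ^ 2 / (η * ‖u‖ ^ 2)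
      ≤ (⟪T w - (η * Complex.I) • w, w⟫_ℂ).im := by
  have hnorm : ‖conj ((η : ℂ) * Complex.I)‖ = η := by simp [abs_of_nonneg hη]
  have him : ((η : ℂ) * Complex.I).im = η := by simp
  rw [hT.inner_sub_smul_apply_of_apply_eq_zero hu, hT.im_inner_sub_smul_apply_self, him,
    norm_neg, norm_mul, hnorm]
  refine div_le_of_le_mul₀ (by positivity) (by positivity) ?_
  calc (η * ‖⟪w, u⟫_ℂ‖) ^ 2 ≤ η ^ 2 * (‖w‖ * ‖u‖) ^ 2 := by
        rw [mul_pow]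
        gcongr
        exact norm_inner_le_norm w u
    _ = η * ‖w‖ ^ 2 * (η * ‖u‖ ^ 2) := by ring

end LinearMap.IsSymmetric

namespace EuclideanSpace

variable {𝕜 n : Type*} [RCLike 𝕜] [Fintype n]

lemma star_dotProduct_eq_inner_toLp (x y : n → 𝕜) :
    star x ⬝ᵥ y = ⟪toLp 2 x, toLp 2 y⟫_𝕜 := by
  rw [inner_toLp_toLp, dotProduct_comm]

lemma sum_norm_sq_eq_norm_toLp_sq (x : n → 𝕜) : ∑ i, ‖x i‖ ^ 2 = ‖toLp 2 x‖ ^ 2 :=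
  (norm_sq_eq _).symm

end EuclideanSpace

namespace Matrix

variable {n : Type*} [Fintype n] [DecidableEq n]

lemma toLp_sub_smul_one_mulVec (H : Matrix n n ℂ) (z : ℂ) (w : n → ℂ) :
    toLp 2 ((H - z • 1) *ᵥ w) = H.toEuclideanLin (toLp 2 w) - z • toLp 2 w := by
  rw [sub_mulVec, smul_mulVec, one_mulVec]
  rfl

lemma IsHermitian.isUnit_sub_smul_one {H : Matrix n n ℂ} (hH : H.IsHermitian) {z : ℂ}
    (hz : z.im ≠ 0) : IsUnit (H - z • 1) := by
  refine mulVec_injective_iff_isUnit.mp fun a b hab ↦ ?_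
  have hab' := congrArg (toLp 2) hab
  rw [toLp_sub_smul_one_mulVec, toLp_sub_smul_one_mulVec] at hab'
  exact WithLp.toLp_injective 2
    ((isSymmetric_toEuclideanLin_iff.mpr hH).injective_sub_smul hz hab')

end Matrix

theorem resolvent_delocalization_bound_general
    (N : ℕ)
    (H : Matrix (Fin N) (Fin N) ℂ) (hH : H.IsHermitian)
    (u : Fin N → ℂ) (hHu : H.mulVec u = 0)
    (η : ℝ) (hη : 0 < η) :
    IsUnit (H - ((η : ℂ) * Complex.I) • (1 : Matrix (Fin N) (Fin N) ℂ))
    ∧ ∀ v : Fin N → ℂ,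
        ‖star v ⬝ᵥ u‖ ^ 2 / (η * ∑ i, ‖u i‖ ^ 2)
          ≤ (star v ⬝ᵥ
              (H - ((η : ℂ) * Complex.I) • (1 : Matrix (Fin N) (Fin N) ℂ))⁻¹.mulVec v).im := by
  set A := H - ((η : ℂ) * Complex.I) • (1 : Matrix (Fin N) (Fin N) ℂ)
  have hA : IsUnit A := hH.isUnit_sub_smul_one (by simpa using hη.ne')
  refine ⟨hA, fun v ↦ ?_⟩
  obtain ⟨w, rfl⟩ := mulVec_surjective_iff_isUnit.mpr hA v
  have hTu : H.toEuclideanLin (toLp 2 u) = 0 := congrArg (toLp 2) hHu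
  rw [mulVec_mulVec, nonsing_inv_mul A ((isUnit_iff_isUnit_det A).mp hA), one_mulVec,
    EuclideanSpace.star_dotProduct_eq_inner_toLp, EuclideanSpace.star_dotProduct_eq_inner_toLp,
    EuclideanSpace.sum_norm_sq_eq_norm_toLp_sq, toLp_sub_smul_one_mulVec]
  exact (isSymmetric_toEuclideanLin_iff.mpr hH).norm_inner_sq_div_le_im_inner hTu hη.le _

/-- The spectral-decomposition estimate (5.3) in the proof of Corollary 2.7 of the
paper: if `H` is Hermitian with `H·u = 0`, `u ≠ 0`, then for every `v`,
`Im ⟪v, (H − iη·1)⁻¹·v⟫ ≥ |⟪v,u⟫|²/(η·‖u‖²)`.  Here `⟪x,y⟫ = Σ_k conj(x_k)·y_k`. -/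
theorem resolvent_delocalization_bound
    (N : ℕ) (hN : 1 ≤ N)
    (H : Matrix (Fin N) (Fin N) ℂ) (hH : H.IsHermitian)
    (u : Fin N → ℂ) (hu : u ≠ 0) (hHu : H.mulVec u = 0)
    (η : ℝ) (hη : 0 < η) :
    IsUnit (H - ((η : ℂ) * Complex.I) • (1 : Matrix (Fin N) (Fin N) ℂ))
    ∧ ∀ v : Fin N → ℂ,
        ‖star v ⬝ᵥ u‖ ^ 2 / (η * ∑ i, ‖u i‖ ^ 2)
          ≤ (star v ⬝ᵥ
              (H - ((η : ℂ) * Complex.I) • (1 : Matrix (Fin N) (Fin N) ℂ))⁻¹.mulVec v).im :=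
  resolvent_delocalization_bound_general N H hH u hHu η hη
end
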